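/- arXiv:2406.10748 — 2 statements merged into one kernel-verified Lean document; each statement's English description precedes it below -/
import Mathlib

section
/- There is no circulant Hadamard matrix of order n = 4m with m > 1 whose defining row h has exactly one maximal run of consecutive size-1 blocks (α₁ = 1). Equivalently: if h : ZMod n → {1, -1} has α₁ = 1, then some nontrivial circular autocorrelation ∑_j h(j) h(j - s) is nonzero. -/
open Finset
open scoped Classical

/-- `h` is a `±1` vector. -/
def signRow (n : ℕ) (h : ZMod n → ℤ) : Prop := ∀ j, h j = 1 ∨ h j = -1

/-- All nontrivial circular autocorrelations of `h` vanish: `h` is the defining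
row of a circulant Hadamard matrix. -/
def hadamardRow (n : ℕ) [NeZero n] (h : ZMod n → ℤ) : Prop :=
  ∀ s : ZMod n, s ≠ 0 → ∑ j : ZMod n, h j * h (j - s) = 0

/-- `j` is the first index of a maximal (cyclic) constant block of `h`. -/
def isStart (n : ℕ) (h : ZMod n → ℤ) (j : ZMod n) : Prop := h j ≠ h (j - 1)

/-- The length of the maximal constant run of `h` beginning at `j`. -/
noncomputable def blockLen (n : ℕ) (h : ZMod n → ℤ) (j : ZMod n) : ℕ :=
  sInf {k : ℕ | 0 < k ∧ h (j + (k : ZMod n)) ≠ h j}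

/-- `j` is (the position of) a block of size exactly 1. -/
def oneBlock (n : ℕ) (h : ZMod n → ℤ) (j : ZMod n) : Prop :=
  h j ≠ h (j - 1) ∧ h j ≠ h (j + 1)

/-- `j` starts a block of size exactly 2. -/
def twoBlock (n : ℕ) (h : ZMod n → ℤ) (j : ZMod n) : Prop :=
  h j ≠ h (j - 1) ∧ h j = h (j + 1) ∧ h (j + 1) ≠ h (j + 2)

/-- `j` starts a block of size at least 3. -/
def bigBlock (n : ℕ) (h : ZMod n → ℤ) (j : ZMod n) : Prop :=
  h j ≠ h (j - 1) ∧ h j = h (j + 1) ∧ h (j + 1) = h (j + 2)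

/-- The block ending at `j - 1` has size exactly 2. -/
def prevTwo (n : ℕ) (h : ZMod n → ℤ) (j : ZMod n) : Prop :=
  h (j - 1) = h (j - 2) ∧ h (j - 2) ≠ h (j - 3)

/-- The block ending at `j - 1` has size at least 3. -/
def prevBig (n : ℕ) (h : ZMod n → ℤ) (j : ZMod n) : Prop :=
  h (j - 1) = h (j - 2) ∧ h (j - 2) = h (j - 3)

/-- `j` is the first 1-block of a maximal run of consecutive 1-blocks
(a `1`-alternating sequence). -/
def oneRunStart (n : ℕ) (h : ZMod n → ℤ) (j : ZMod n) : Prop :=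
  oneBlock n h j ∧ ¬ oneBlock n h (j - 1)

/-- `j` starts the first 2-block of a maximal run of consecutive 2-blocks
(a `2`-alternating sequence). -/
def twoRunStart (n : ℕ) (h : ZMod n → ℤ) (j : ZMod n) : Prop :=
  twoBlock n h j ∧ ¬ twoBlock n h (j - 2)

/-- `j` starts the first block of a maximal run of consecutive blocks of size `≥ 3`. -/
def bigRunStart (n : ℕ) (h : ZMod n → ℤ) (j : ZMod n) : Prop :=
  bigBlock n h j ∧ ¬ prevBig n h j

/-- The number `α₁` of maximal runs of consecutive 1-blocks. -/
noncomputable def alpha1 (n : ℕ) [NeZero n] (h : ZMod n → ℤ) : ℕ :=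
  (Finset.univ.filter fun j => oneRunStart n h j).card

/-- The length (number of 1-blocks) of the maximal run of 1-blocks starting at `j`. -/
noncomputable def oneRunLen (n : ℕ) (h : ZMod n → ℤ) (j : ZMod n) : ℕ :=
  sInf {l : ℕ | 0 < l ∧ ¬ oneBlock n h (j + (l : ZMod n))}

/-- The length (number of 2-blocks) of the maximal run of 2-blocks starting at `j`. -/
noncomputable def twoRunLen (n : ℕ) (h : ZMod n → ℤ) (j : ZMod n) : ℕ :=
  sInf {l : ℕ | 0 < l ∧ ¬ twoBlock n h (j + ((2 * l : ℕ) : ZMod n))}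



private lemma sumShiftR {n : ℕ} [NeZero n] (F : ZMod n → ℤ) (c : ZMod n) :
    ∑ j : ZMod n, F (j + c) = ∑ j : ZMod n, F j :=
  Fintype.sum_equiv (Equiv.addRight c) _ _ fun _ => rfl

private lemma sumShiftL' {n : ℕ} [NeZero n] (F G : ZMod n → ℤ) (c : ZMod n)
    (hFG : ∀ j, G j = F (c + j)) : ∑ j : ZMod n, G j = ∑ j : ZMod n, F j := by
  rw [Finset.sum_congr rfl (fun j _ => hFG j)]
  exact Fintype.sum_equiv (Equiv.addLeft c) _ _ fun _ => rfl

private lemma sumShift' {n : ℕ} [NeZero n] (F G : ZMod n → ℤ) (c : ZMod n)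
    (hFG : ∀ j, G j = F (j + c)) : ∑ j : ZMod n, G j = ∑ j : ZMod n, F j := by
  rw [Finset.sum_congr rfl (fun j _ => hFG j)]; exact sumShiftR F c

private lemma expand16 (F : ZMod 16 → ℤ) :
    ∑ j : ZMod 16, F j = F 0 + F 1 + F 2 + F 3 + F 4 + F 5 + F 6 + F 7 + F 8 + F 9
      + F 10 + F 11 + F 12 + F 13 + F 14 + F 15 := by
  have huniv : (Finset.univ : Finset (ZMod 16)) =
      {0,1,2,3,4,5,6,7,8,9,10,11,12,13,14,15} := by decide
  rw [huniv]
  simp (config := { decide := true }) [Finset.sum_insert, Finset.mem_insert]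
  ring

private lemma bash32 (u7 u8 u9 u10 u11 : ℤ)
    (h7 : u7 = 0 ∨ u7 = 1) (h8 : u8 = 0 ∨ u8 = 1) (h9 : u9 = 0 ∨ u9 = 1)
    (h10 : u10 = 0 ∨ u10 = 1) (h11 : u11 = 0 ∨ u11 = 1)
    (e1 : u7 + u8 + u9 + u10 + u11 = 1)
    (e2 : u7 + u11 + u7*u9 + u8*u10 + u9*u11 = 1) :
    (u7 = 1 ∧ u8 = 0 ∧ u9 = 0 ∧ u10 = 0 ∧ u11 = 0)
    ∨ (u7 = 0 ∧ u8 = 0 ∧ u9 = 0 ∧ u10 = 0 ∧ u11 = 1) := by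
  rcases h7 with h7 | h7 <;> rcases h8 with h8 | h8 <;> rcases h9 with h9 | h9 <;>
    rcases h10 with h10 | h10 <;> rcases h11 with h11 | h11 <;> simp_all

private lemma keyStructure (h : ZMod 16 → ℤ) (D : ZMod 16 → ℤ)
    (hD01 : ∀ j, D j = 0 ∨ D j = 1)
    (hDiff : ∀ j : ZMod 16, D j = 1 ↔ h (j+1) ≠ h j)
    (halpha : alpha1 16 h = 1)
    (hv1 : ∑ j : ZMod 16, D j = 8)
    (hv2 : ∑ j : ZMod 16, D j * D (j+1) = 4)
    (hv3 : ∑ j : ZMod 16, D j * D (j+2) = 6)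
    (hRE : ∑ j : ZMod 16, D j * D (j+1) * (1 - D (j+2)) = 1)
    (ha1 : ∑ j : ZMod 16, D j * D (j+1) * (1 - D (j+2)) * D (j+3) = 1)
    (hb1 : ∑ j : ZMod 16, D j * (1 - D (j+1)) * D (j+2) * D (j+3) = 1) :
    ∃ j₀ : ZMod 16, D j₀ = 1 ∧ D (j₀+1) = 1 ∧ D (j₀+2) = 1 ∧ D (j₀+3) = 1
      ∧ D (j₀+4) = 0 ∧ D (j₀+5) = 1 ∧ D (j₀+6) = 0
      ∧ D (j₀+12) = 0 ∧ D (j₀+13) = 1 ∧ D (j₀+14) = 0 ∧ D (j₀+15) = 1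
      ∧ ((D (j₀+7) = 1 ∧ D (j₀+8) = 0 ∧ D (j₀+9) = 0 ∧ D (j₀+10) = 0 ∧ D (j₀+11) = 0)
        ∨ (D (j₀+7) = 0 ∧ D (j₀+8) = 0 ∧ D (j₀+9) = 0 ∧ D (j₀+10) = 0 ∧ D (j₀+11) = 1)) := by
  have h16 : (16 : ZMod 16) = 0 := by decide
  have hOBiff : ∀ j : ZMod 16, oneBlock 16 h j ↔ (D (j-1) = 1 ∧ D j = 1) := by
    intro j
    have e1 := hDiff (j-1); rw [sub_add_cancel] at e1
    have e2 := hDiff j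
    unfold oneBlock
    constructor
    · rintro ⟨a, b⟩
      constructor
      · first | exact e1.2 a | exact e1.2 (Ne.symm a)
      · first | exact e2.2 b | exact e2.2 (Ne.symm b)
    · rintro ⟨a, b⟩
      constructor
      · first | exact e1.1 a | exact Ne.symm (e1.1 a)
      · first | exact e2.1 b | exact Ne.symm (e2.1 b)
  -- unique run start j₀
  unfold alpha1 at halpha
  obtain ⟨j₀, hj₀set⟩ := Finset.card_eq_one.mp halpha
  have hj₀ : oneRunStart 16 h j₀ := by
    have : j₀ ∈ Finset.univ.filter (fun j => oneRunStart 16 h j) := by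
      rw [hj₀set]; exact Finset.mem_singleton_self j₀
    exact (Finset.mem_filter.mp this).2
  have huniqRS : ∀ x, oneRunStart 16 h x → x = j₀ := by
    intro x hx
    have : x ∈ Finset.univ.filter (fun j => oneRunStart 16 h j) :=
      Finset.mem_filter.mpr ⟨Finset.mem_univ x, hx⟩
    rw [hj₀set] at this; exact Finset.mem_singleton.mp this
  -- unique run end y₀
  have hindRE : ∀ j : ZMod 16, D j * D (j+1) * (1 - D (j+2))
      = (if (oneBlock 16 h (j+1) ∧ ¬ oneBlock 16 h (j+2)) then (1:ℤ) else 0) := by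
    intro j
    have o1 := hOBiff (j+1); rw [add_sub_cancel_right] at o1
    have o2 := hOBiff (j+2); rw [show (j+2-1 : ZMod 16) = j+1 from by ring] at o2
    rcases hD01 j with e | e <;> rcases hD01 (j+1) with e1 | e1 <;>
      rcases hD01 (j+2) with e2 | e2 <;>
      simp [o1, o2, e, e1, e2]
  have hREcard : (Finset.univ.filter
      (fun x : ZMod 16 => oneBlock 16 h x ∧ ¬ oneBlock 16 h (x+1))).card = 1 := by
    have e := hRE
    rw [Finset.sum_congr rfl (fun j _ => hindRE j)] at e
    rw [sumShift' (fun k => if (oneBlock 16 h k ∧ ¬ oneBlock 16 h (k+1)) then (1:ℤ) else 0) _ 1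
      (fun j => by
        show (if (oneBlock 16 h (j+1) ∧ ¬ oneBlock 16 h (j+2)) then (1:ℤ) else 0)
          = (if (oneBlock 16 h (j+1) ∧ ¬ oneBlock 16 h (j+1+1)) then (1:ℤ) else 0)
        rw [show (j+1+1 : ZMod 16) = j+2 from by ring])] at e
    rw [Finset.sum_boole] at e
    exact_mod_cast e
  obtain ⟨y₀, hy₀set⟩ := Finset.card_eq_one.mp hREcard
  have hy₀ : oneBlock 16 h y₀ ∧ ¬ oneBlock 16 h (y₀+1) := by
    have : y₀ ∈ Finset.univ.filter
        (fun x : ZMod 16 => oneBlock 16 h x ∧ ¬ oneBlock 16 h (x+1)) := by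
      rw [hy₀set]; exact Finset.mem_singleton_self y₀
    exact (Finset.mem_filter.mp this).2
  have huniqRE : ∀ x, oneBlock 16 h x → ¬ oneBlock 16 h (x+1) → x = y₀ := by
    intro x hx hnx
    have : x ∈ Finset.univ.filter
        (fun x : ZMod 16 => oneBlock 16 h x ∧ ¬ oneBlock 16 h (x+1)) :=
      Finset.mem_filter.mpr ⟨Finset.mem_univ x, hx, hnx⟩
    rw [hy₀set] at this; exact Finset.mem_singleton.mp this
  -- number of one-blocks is 4
  have hindOB : ∀ j : ZMod 16, D j * D (j+1)
      = (if oneBlock 16 h (j+1) then (1:ℤ) else 0) := by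
    intro j
    have o1 := hOBiff (j+1); rw [add_sub_cancel_right] at o1
    rcases hD01 j with e | e <;> rcases hD01 (j+1) with e1 | e1 <;> simp [o1, e, e1]
  have hOcard : (Finset.univ.filter (fun x : ZMod 16 => oneBlock 16 h x)).card = 4 := by
    have e := hv2
    rw [Finset.sum_congr rfl (fun j _ => hindOB j)] at e
    rw [sumShift' (fun k => if oneBlock 16 h k then (1:ℤ) else 0) _ 1
      (fun j => by
        show (if oneBlock 16 h (j+1) then (1:ℤ) else 0)
          = (if oneBlock 16 h (j+1) then (1:ℤ) else 0)
        rfl)] at e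
    rw [Finset.sum_boole] at e
    exact_mod_cast e
  -- closures
  have hfwd : ∀ x, oneBlock 16 h x → x ≠ y₀ → oneBlock 16 h (x+1) := by
    intro x hx hne
    by_contra hno
    exact hne (huniqRE x hx hno)
  have hbwd : ∀ x, oneBlock 16 h x → x ≠ j₀ → oneBlock 16 h (x-1) := by
    intro x hx hne
    by_contra hno
    exact hne (huniqRS x ⟨hx, hno⟩)
  -- the chain from j₀ to y₀
  set k := (y₀ - j₀).val with hkdef
  have hk16 : k < 16 := ZMod.val_lt _
  have hy0k : y₀ = j₀ + (k : ZMod 16) := by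
    have hri := ZMod.natCast_rightInverse (n := 16) (y₀ - j₀)
    rw [← hkdef] at hri
    rw [hri]; ring
  have hchain : ∀ i : ℕ, i ≤ k → oneBlock 16 h (j₀ + (i : ZMod 16)) := by
    intro i
    induction i with
    | zero => intro _; simpa using hj₀.1
    | succ i ih =>
      intro hik
      have hoi := ih (by omega)
      have hne : j₀ + (i : ZMod 16) ≠ y₀ := by
        intro he
        have hsub : y₀ - j₀ = (i : ZMod 16) := by rw [← he]; ring
        have hki : k = i % 16 := by rw [hkdef, hsub, ZMod.val_natCast]
        omega
      have hob := hfwd _ hoi hne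
      have hcast : ((i+1 : ℕ) : ZMod 16) = (i : ZMod 16) + 1 := by push_cast; ring
      rw [hcast, ← add_assoc]
      exact hob
  set CF : Finset (ZMod 16) := (Finset.range (k+1)).image (fun i : ℕ => j₀ + (i : ZMod 16))
    with hCFdef
  have hj₀CF : j₀ ∈ CF := by
    rw [hCFdef]
    exact Finset.mem_image.mpr ⟨0, Finset.mem_range.mpr (by omega), by simp⟩
  have hCFsub : ∀ x ∈ CF, oneBlock 16 h x := by
    intro x hx
    rw [hCFdef] at hx
    obtain ⟨i, hi, rfl⟩ := Finset.mem_image.mp hx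
    exact hchain i (by have := Finset.mem_range.mp hi; omega)
  have hback : ∀ t : ℕ, ∀ x : ZMod 16, oneBlock 16 h x → x ∉ CF →
      oneBlock 16 h (x - (t : ZMod 16)) ∧ (x - (t : ZMod 16)) ∉ CF := by
    intro t
    induction t with
    | zero => intro x hx hnx; simpa using ⟨hx, hnx⟩
    | succ t ih =>
      intro x hx hnx
      obtain ⟨hob, hnc⟩ := ih x hx hnx
      have hne : x - (t : ZMod 16) ≠ j₀ := fun he => hnc (he ▸ hj₀CF)
      have hob' := hbwd _ hob hne
      have hcast : x - ((t+1 : ℕ) : ZMod 16) = x - (t:ZMod 16) - 1 := by push_cast; ring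
      rw [hcast]
      refine ⟨hob', ?_⟩
      intro hmem
      rw [hCFdef] at hmem
      obtain ⟨i, hi, hieq⟩ := Finset.mem_image.mp hmem
      have hik : i ≤ k := by have := Finset.mem_range.mp hi; omega
      rcases Nat.lt_or_ge i k with hik' | hik'
      · apply hnc
        rw [hCFdef]
        apply Finset.mem_image.mpr
        refine ⟨i+1, Finset.mem_range.mpr (by omega), ?_⟩
        have hc2 : ((i+1 : ℕ) : ZMod 16) = (i : ZMod 16) + 1 := by push_cast; ring
        rw [hc2]
        linear_combination hieq
      · have hik2 : i = k := le_antisymm hik hik'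
        rw [hik2] at hieq
        have hxy : x - (t:ZMod 16) = y₀ + 1 := by rw [hy0k]; linear_combination -hieq
        rw [hxy] at hob
        exact hy₀.2 hob
  have hOsubCF : ∀ x : ZMod 16, oneBlock 16 h x → x ∈ CF := by
    intro x hx
    by_contra hnx
    have hb := hback ((x - j₀).val) x hx hnx
    have hxt : x - (((x - j₀).val : ℕ) : ZMod 16) = j₀ := by
      rw [ZMod.natCast_rightInverse (x - j₀)]; ring
    rw [hxt] at hb
    exact hb.2 hj₀CF
  have hinj : Set.InjOn (fun i : ℕ => j₀ + (i : ZMod 16)) (Finset.range (k+1)) := by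
    intro i hi i' hi' he
    simp only at he
    have hcast : (i : ZMod 16) = (i' : ZMod 16) := add_left_cancel he
    have hmod : i % 16 = i' % 16 := by
      rw [← ZMod.val_natCast, ← ZMod.val_natCast, hcast]
    have hi1 := Finset.mem_range.mp (Finset.mem_coe.mp hi)
    have hi2 := Finset.mem_range.mp (Finset.mem_coe.mp hi')
    omega
  have hCFcard : CF.card = k + 1 := by
    rw [hCFdef, Finset.card_image_of_injOn hinj, Finset.card_range]
  have hOeq : Finset.univ.filter (fun x : ZMod 16 => oneBlock 16 h x) = CF := by
    apply Finset.Subset.antisymm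
    · intro x hx; exact hOsubCF x (Finset.mem_filter.mp hx).2
    · intro x hx; exact Finset.mem_filter.mpr ⟨Finset.mem_univ x, hCFsub x hx⟩
  have hk3 : k = 3 := by
    rw [hOeq, hCFcard] at hOcard; omega
  have hOmem : ∀ x : ZMod 16, oneBlock 16 h x → ∃ i : ℕ, i < 4 ∧ x = j₀ + (i : ZMod 16) := by
    intro x hx
    have := hOsubCF x hx
    rw [hCFdef] at this
    obtain ⟨i, hi, he⟩ := Finset.mem_image.mp this
    exact ⟨i, by have := Finset.mem_range.mp hi; omega, he.symm⟩
  -- one-blocks at j₀ .. j₀+3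
  have ob0 : oneBlock 16 h j₀ := hj₀.1
  have ob1 : oneBlock 16 h (j₀ + 1) := by
    have := hchain 1 (by omega); norm_num at this; exact this
  have ob2 : oneBlock 16 h (j₀ + 2) := by
    have := hchain 2 (by omega); norm_num at this; exact this
  have ob3 : oneBlock 16 h (j₀ + 3) := by
    have := hchain 3 (by omega); norm_num at this; exact this
  -- basic D values
  have hd0 : D j₀ = 1 := ((hOBiff j₀).mp ob0).2
  have hd1 : D (j₀ + 1) = 1 := ((hOBiff (j₀+1)).mp ob1).2
  have hd2 : D (j₀ + 2) = 1 := ((hOBiff (j₀+2)).mp ob2).2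
  have hd3 : D (j₀ + 3) = 1 := ((hOBiff (j₀+3)).mp ob3).2
  have hd15 : D (j₀ + 15) = 1 := by
    have e := ((hOBiff j₀).mp ob0).1
    rwa [show (j₀ - 1 : ZMod 16) = j₀ + 15 from by linear_combination -h16] at e
  have hnob : ∀ t : ZMod 16, t ≠ 0 → t ≠ 1 → t ≠ 2 → t ≠ 3 → ¬ oneBlock 16 h (j₀ + t) := by
    intro t h0 h1 h2 h3 hob
    obtain ⟨i, hi4, he⟩ := hOmem _ hob
    have hti : t = (i : ZMod 16) := add_left_cancel he
    interval_cases i <;> norm_num at hti <;>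
      first | exact h0 hti | exact h1 hti | exact h2 hti | exact h3 hti
  have hd4 : D (j₀ + 4) = 0 := by
    rcases hD01 (j₀ + 4) with e | e
    · exact e
    · exfalso
      apply hnob 4 (by decide) (by decide) (by decide) (by decide)
      rw [hOBiff]
      exact ⟨by rwa [show (j₀ + 4 - 1 : ZMod 16) = j₀ + 3 from by ring], e⟩
  have hd14 : D (j₀ + 14) = 0 := by
    rcases hD01 (j₀ + 14) with e | e
    · exact e
    · exfalso
      apply hnob 15 (by decide) (by decide) (by decide) (by decide)
      rw [hOBiff]
      exact ⟨by rwa [show (j₀ + 15 - 1 : ZMod 16) = j₀ + 14 from by ring], hd15⟩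
  -- a-extraction : D (j₀+5) = 1
  have hexA : ∃ j : ZMod 16, D j * D (j+1) * (1 - D (j+2)) * D (j+3) ≠ 0 := by
    by_contra hno; push_neg at hno
    rw [Finset.sum_eq_zero (fun j _ => hno j)] at ha1
    norm_num at ha1
  obtain ⟨jA, hjA⟩ := hexA
  have cA1 : D jA = 1 := by
    rcases hD01 jA with e | e
    · exfalso; apply hjA; rw [e]; ring
    · exact e
  have cA2 : D (jA+1) = 1 := by
    rcases hD01 (jA+1) with e | e
    · exfalso; apply hjA; rw [e]; ring
    · exact e
  have cA3 : D (jA+2) = 0 := by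
    rcases hD01 (jA+2) with e | e
    · exact e
    · exfalso; apply hjA; rw [e]; ring
  have cA4 : D (jA+3) = 1 := by
    rcases hD01 (jA+3) with e | e
    · exfalso; apply hjA; rw [e]; ring
    · exact e
  have obA : oneBlock 16 h (jA + 1) := by
    rw [hOBiff, add_sub_cancel_right]
    exact ⟨cA1, cA2⟩
  have hd5 : D (j₀ + 5) = 1 := by
    obtain ⟨i, hi4, heA⟩ := hOmem _ obA
    have hre : (jA + 2 : ZMod 16) = jA + 1 + 1 := by ring
    interval_cases i <;> norm_num at heA
    · exfalso
      rw [hre, heA] at cA3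
      omega
    · exfalso
      rw [hre, heA, add_assoc, show (1+1 : ZMod 16) = 2 from by decide] at cA3
      omega
    · exfalso
      rw [hre, heA, add_assoc, show (2+1 : ZMod 16) = 3 from by decide] at cA3
      omega
    · have : (jA + 3 : ZMod 16) = j₀ + 5 := by
        rw [show (jA + 3 : ZMod 16) = jA + 1 + 2 from by ring, heA, add_assoc]
        norm_num
      rwa [this] at cA4
  -- b-extraction : D (j₀+13) = 1
  have hexB : ∃ j : ZMod 16, D j * (1 - D (j+1)) * D (j+2) * D (j+3) ≠ 0 := by
    by_contra hno; push_neg at hno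
    rw [Finset.sum_eq_zero (fun j _ => hno j)] at hb1
    norm_num at hb1
  obtain ⟨jB, hjB⟩ := hexB
  have cB1 : D jB = 1 := by
    rcases hD01 jB with e | e
    · exfalso; apply hjB; rw [e]; ring
    · exact e
  have cB2 : D (jB+1) = 0 := by
    rcases hD01 (jB+1) with e | e
    · exact e
    · exfalso; apply hjB; rw [e]; ring
  have cB3 : D (jB+2) = 1 := by
    rcases hD01 (jB+2) with e | e
    · exfalso; apply hjB; rw [e]; ring
    · exact e
  have cB4 : D (jB+3) = 1 := by
    rcases hD01 (jB+3) with e | e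
    · exfalso; apply hjB; rw [e]; ring
    · exact e
  have obB : oneBlock 16 h (jB + 3) := by
    rw [hOBiff]
    exact ⟨by rwa [show (jB + 3 - 1 : ZMod 16) = jB + 2 from by ring], cB4⟩
  have hd13 : D (j₀ + 13) = 1 := by
    obtain ⟨i, hi4, heB⟩ := hOmem _ obB
    have hre : (jB + 1 : ZMod 16) = jB + 3 + 14 := by linear_combination -h16
    interval_cases i <;> norm_num at heB
    · have : (j₀ + 13 : ZMod 16) = jB := by
        rw [show jB = jB + 3 + 13 from by linear_combination -h16, heB]
      rwa [this]
    · exfalso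
      rw [hre, heB, add_assoc, show (1+14 : ZMod 16) = 15 from by decide] at cB2
      omega
    · exfalso
      rw [hre, heB, add_assoc, show (2+14 : ZMod 16) = 0 from by decide, add_zero] at cB2
      omega
    · exfalso
      rw [hre, heB, add_assoc, show (3+14 : ZMod 16) = 1 from by decide] at cB2
      omega
  -- adjacency zeros
  have hd6 : D (j₀ + 6) = 0 := by
    rcases hD01 (j₀ + 6) with e | e
    · exact e
    · exfalso
      apply hnob 6 (by decide) (by decide) (by decide) (by decide)
      rw [hOBiff]
      exact ⟨by rwa [show (j₀ + 6 - 1 : ZMod 16) = j₀ + 5 from by ring], e⟩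
  have hd12 : D (j₀ + 12) = 0 := by
    rcases hD01 (j₀ + 12) with e | e
    · exact e
    · exfalso
      apply hnob 13 (by decide) (by decide) (by decide) (by decide)
      rw [hOBiff]
      exact ⟨by rwa [show (j₀ + 13 - 1 : ZMod 16) = j₀ + 12 from by ring], hd13⟩
  -- expansion of the total sum
  have hshiftS : ∑ j : ZMod 16, D (j₀ + j) = (8:ℤ) := by
    rw [sumShiftL' D (fun j => D (j₀ + j)) j₀ (fun j => rfl)]; exact hv1
  have heS := expand16 (fun t => D (j₀ + t))
  rw [hshiftS, add_zero] at heS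
  rw [hd0, hd1, hd2, hd3, hd4, hd5, hd6, hd12, hd13, hd14, hd15] at heS
  have e1' : D (j₀+7) + D (j₀+8) + D (j₀+9) + D (j₀+10) + D (j₀+11) = 1 := by
    linarith [heS]
  -- expansion of the distance-2 sum
  have hshiftP2 : ∑ j : ZMod 16, D (j₀ + j) * D (j₀ + (j + 2)) = (6:ℤ) := by
    have hstep : ∑ j : ZMod 16, D (j₀ + j) * D (j₀ + (j + 2))
        = ∑ j : ZMod 16, D (j₀ + j) * D (j₀ + j + 2) :=
      Finset.sum_congr rfl (fun j _ => by rw [add_assoc])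
    rw [hstep, sumShiftL' (fun kk => D kk * D (kk + 2)) (fun j => D (j₀ + j) * D (j₀ + j + 2))
      j₀ (fun j => rfl)]
    exact hv3
  have heP2 := expand16 (fun t => D (j₀ + t) * D (j₀ + (t + 2)))
  rw [hshiftP2] at heP2
  simp only [show ((0:ZMod 16) + 2) = 2 from by decide, show ((1:ZMod 16) + 2) = 3 from by decide,
    show ((2:ZMod 16) + 2) = 4 from by decide, show ((3:ZMod 16) + 2) = 5 from by decide,
    show ((4:ZMod 16) + 2) = 6 from by decide, show ((5:ZMod 16) + 2) = 7 from by decide,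
    show ((6:ZMod 16) + 2) = 8 from by decide, show ((7:ZMod 16) + 2) = 9 from by decide,
    show ((8:ZMod 16) + 2) = 10 from by decide, show ((9:ZMod 16) + 2) = 11 from by decide,
    show ((10:ZMod 16) + 2) = 12 from by decide, show ((11:ZMod 16) + 2) = 13 from by decide,
    show ((12:ZMod 16) + 2) = 14 from by decide, show ((13:ZMod 16) + 2) = 15 from by decide,
    show ((14:ZMod 16) + 2) = 0 from by decide, show ((15:ZMod 16) + 2) = 1 from by decide,
    add_zero] at heP2
  rw [hd0, hd1, hd2, hd3, hd4, hd5, hd6, hd12, hd13, hd14, hd15] at heP2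
  have e2' : D (j₀+7) + D (j₀+11) + D (j₀+7) * D (j₀+9) + D (j₀+8) * D (j₀+10)
      + D (j₀+9) * D (j₀+11) = 1 := by
    linear_combination -heP2
  have hAB := bash32 (D (j₀+7)) (D (j₀+8)) (D (j₀+9)) (D (j₀+10)) (D (j₀+11))
    (hD01 _) (hD01 _) (hD01 _) (hD01 _) (hD01 _) e1' e2'
  exact ⟨j₀, hd0, hd1, hd2, hd3, hd4, hd5, hd6, hd12, hd13, hd14, hd15, hAB⟩

private lemma finalA (h : ZMod 16 → ℤ) (D : ZMod 16 → ℤ) (j₀ : ZMod 16)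
    (hsq : ∀ j : ZMod 16, h j * h j = 1)
    (hD1 : ∀ j, D j = 1 → h (j + 1) = - h j)
    (hD0 : ∀ j, D j = 0 → h (j + 1) = h j)
    (hcF : ∀ s : ZMod 16, s ≠ 0 → ∑ j : ZMod 16, h (j + s) * h j = 0)
    (hd0 : D j₀ = 1) (hd1 : D (j₀ + 1) = 1) (hd2 : D (j₀ + 2) = 1)
    (hd3 : D (j₀ + 3) = 1) (hd4 : D (j₀ + 4) = 0) (hd5 : D (j₀ + 5) = 1)
    (hd6 : D (j₀ + 6) = 0) (hd7 : D (j₀ + 7) = 1) (hd8 : D (j₀ + 8) = 0)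
    (hd9 : D (j₀ + 9) = 0) (hd10 : D (j₀ + 10) = 0) (hd11 : D (j₀ + 11) = 0)
    (hd12 : D (j₀ + 12) = 0) (hd13 : D (j₀ + 13) = 1) (hd14 : D (j₀ + 14) = 0)
    (hd15 : D (j₀ + 15) = 1) : False := by
  -- h value chain : case A pattern [1,-1,1,-1,1,1,-1,-1,1,1,1,1,1,1,-1,-1]
  have q1 : h (j₀ + 1) = - h j₀ := hD1 j₀ hd0
  have step1 : ∀ (c c' : ZMod 16), c + 1 = c' → D (j₀ + c) = 1 →
      h (j₀ + c') = - h (j₀ + c) := by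
    intro c c' hcc hd
    have e := hD1 (j₀ + c) hd
    rwa [add_assoc, hcc] at e
  have step0 : ∀ (c c' : ZMod 16), c + 1 = c' → D (j₀ + c) = 0 →
      h (j₀ + c') = h (j₀ + c) := by
    intro c c' hcc hd
    have e := hD0 (j₀ + c) hd
    rwa [add_assoc, hcc] at e
  have q2 : h (j₀ + 2) = h j₀ := by rw [step1 1 2 (by decide) hd1, q1]; ring
  have q3 : h (j₀ + 3) = - h j₀ := by rw [step1 2 3 (by decide) hd2, q2]
  have q4 : h (j₀ + 4) = h j₀ := by rw [step1 3 4 (by decide) hd3, q3]; ring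
  have q5 : h (j₀ + 5) = h j₀ := by rw [step0 4 5 (by decide) hd4, q4]
  have q6 : h (j₀ + 6) = - h j₀ := by rw [step1 5 6 (by decide) hd5, q5]
  have q7 : h (j₀ + 7) = - h j₀ := by rw [step0 6 7 (by decide) hd6, q6]
  have q8 : h (j₀ + 8) = h j₀ := by rw [step1 7 8 (by decide) hd7, q7]; ring
  have q9 : h (j₀ + 9) = h j₀ := by rw [step0 8 9 (by decide) hd8, q8]
  have q10 : h (j₀ + 10) = h j₀ := by rw [step0 9 10 (by decide) hd9, q9]
  have q11 : h (j₀ + 11) = h j₀ := by rw [step0 10 11 (by decide) hd10, q10]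
  have q12 : h (j₀ + 12) = h j₀ := by rw [step0 11 12 (by decide) hd11, q11]
  have q13 : h (j₀ + 13) = h j₀ := by rw [step0 12 13 (by decide) hd12, q12]
  have q14 : h (j₀ + 14) = - h j₀ := by rw [step1 13 14 (by decide) hd13, q13]
  have q15 : h (j₀ + 15) = - h j₀ := by rw [step0 14 15 (by decide) hd14, q14]
  -- correlation at shift 6
  have hc6 := hcF 6 (by decide)
  have hshift : ∑ j : ZMod 16, h (j₀ + j + 6) * h (j₀ + j)
      = ∑ j : ZMod 16, h (j + 6) * h j :=
    sumShiftL' (fun k => h (k + 6) * h k) _ j₀ (fun j => rfl)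
  have hexp := expand16 (fun t => h (j₀ + (t + 6)) * h (j₀ + t))
  simp only [show ((0:ZMod 16) + 6) = 6 from by decide, show ((1:ZMod 16) + 6) = 7 from by decide,
    show ((2:ZMod 16) + 6) = 8 from by decide, show ((3:ZMod 16) + 6) = 9 from by decide,
    show ((4:ZMod 16) + 6) = 10 from by decide, show ((5:ZMod 16) + 6) = 11 from by decide,
    show ((6:ZMod 16) + 6) = 12 from by decide, show ((7:ZMod 16) + 6) = 13 from by decide,
    show ((8:ZMod 16) + 6) = 14 from by decide, show ((9:ZMod 16) + 6) = 15 from by decide,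
    show ((10:ZMod 16) + 6) = 0 from by decide, show ((11:ZMod 16) + 6) = 1 from by decide,
    show ((12:ZMod 16) + 6) = 2 from by decide, show ((13:ZMod 16) + 6) = 3 from by decide,
    show ((14:ZMod 16) + 6) = 4 from by decide, show ((15:ZMod 16) + 6) = 5 from by decide,
    add_zero] at hexp
  have hexp2 : ∑ j : ZMod 16, h (j₀ + j + 6) * h (j₀ + j)
      = ∑ j : ZMod 16, h (j₀ + (j + 6)) * h (j₀ + j) := by
    apply Finset.sum_congr rfl; intro j _; rw [add_assoc]
  rw [hexp2, hexp, q1, q2, q3, q4, q5, q6, q7, q8, q9, q10, q11, q12, q13, q14, q15] at hshift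
  rw [hc6] at hshift
  have h4 : (4:ℤ) = 0 := by linear_combination (-1 : ℤ) * hshift - 4 * hsq j₀
  norm_num at h4


private lemma finalB (h : ZMod 16 → ℤ) (D : ZMod 16 → ℤ) (j₀ : ZMod 16)
    (hsq : ∀ j : ZMod 16, h j * h j = 1)
    (hD1 : ∀ j, D j = 1 → h (j + 1) = - h j)
    (hD0 : ∀ j, D j = 0 → h (j + 1) = h j)
    (hcF : ∀ s : ZMod 16, s ≠ 0 → ∑ j : ZMod 16, h (j + s) * h j = 0)
    (hd0 : D j₀ = 1) (hd1 : D (j₀ + 1) = 1) (hd2 : D (j₀ + 2) = 1)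
    (hd3 : D (j₀ + 3) = 1) (hd4 : D (j₀ + 4) = 0) (hd5 : D (j₀ + 5) = 1)
    (hd6 : D (j₀ + 6) = 0) (hd7 : D (j₀ + 7) = 0) (hd8 : D (j₀ + 8) = 0)
    (hd9 : D (j₀ + 9) = 0) (hd10 : D (j₀ + 10) = 0) (hd11 : D (j₀ + 11) = 1)
    (hd12 : D (j₀ + 12) = 0) (hd13 : D (j₀ + 13) = 1) (hd14 : D (j₀ + 14) = 0)
    (hd15 : D (j₀ + 15) = 1) : False := by
  -- case B pattern [1,-1,1,-1,1,1,-1,-1,-1,-1,-1,-1,1,1,-1,-1]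
  have q1 : h (j₀ + 1) = - h j₀ := hD1 j₀ hd0
  have step1 : ∀ (c c' : ZMod 16), c + 1 = c' → D (j₀ + c) = 1 →
      h (j₀ + c') = - h (j₀ + c) := by
    intro c c' hcc hd
    have e := hD1 (j₀ + c) hd
    rwa [add_assoc, hcc] at e
  have step0 : ∀ (c c' : ZMod 16), c + 1 = c' → D (j₀ + c) = 0 →
      h (j₀ + c') = h (j₀ + c) := by
    intro c c' hcc hd
    have e := hD0 (j₀ + c) hd
    rwa [add_assoc, hcc] at e
  have q2 : h (j₀ + 2) = h j₀ := by rw [step1 1 2 (by decide) hd1, q1]; ring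
  have q3 : h (j₀ + 3) = - h j₀ := by rw [step1 2 3 (by decide) hd2, q2]
  have q4 : h (j₀ + 4) = h j₀ := by rw [step1 3 4 (by decide) hd3, q3]; ring
  have q5 : h (j₀ + 5) = h j₀ := by rw [step0 4 5 (by decide) hd4, q4]
  have q6 : h (j₀ + 6) = - h j₀ := by rw [step1 5 6 (by decide) hd5, q5]
  have q7 : h (j₀ + 7) = - h j₀ := by rw [step0 6 7 (by decide) hd6, q6]
  have q8 : h (j₀ + 8) = - h j₀ := by rw [step0 7 8 (by decide) hd7, q7]
  have q9 : h (j₀ + 9) = - h j₀ := by rw [step0 8 9 (by decide) hd8, q8]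
  have q10 : h (j₀ + 10) = - h j₀ := by rw [step0 9 10 (by decide) hd9, q9]
  have q11 : h (j₀ + 11) = - h j₀ := by rw [step0 10 11 (by decide) hd10, q10]
  have q12 : h (j₀ + 12) = h j₀ := by rw [step1 11 12 (by decide) hd11, q11]; ring
  have q13 : h (j₀ + 13) = h j₀ := by rw [step0 12 13 (by decide) hd12, q12]
  have q14 : h (j₀ + 14) = - h j₀ := by rw [step1 13 14 (by decide) hd13, q13]
  have q15 : h (j₀ + 15) = - h j₀ := by rw [step0 14 15 (by decide) hd14, q14]
  have hc6 := hcF 6 (by decide)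
  have hshift : ∑ j : ZMod 16, h (j₀ + j + 6) * h (j₀ + j)
      = ∑ j : ZMod 16, h (j + 6) * h j :=
    sumShiftL' (fun k => h (k + 6) * h k) _ j₀ (fun j => rfl)
  have hexp := expand16 (fun t => h (j₀ + (t + 6)) * h (j₀ + t))
  simp only [show ((0:ZMod 16) + 6) = 6 from by decide, show ((1:ZMod 16) + 6) = 7 from by decide,
    show ((2:ZMod 16) + 6) = 8 from by decide, show ((3:ZMod 16) + 6) = 9 from by decide,
    show ((4:ZMod 16) + 6) = 10 from by decide, show ((5:ZMod 16) + 6) = 11 from by decide,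
    show ((6:ZMod 16) + 6) = 12 from by decide, show ((7:ZMod 16) + 6) = 13 from by decide,
    show ((8:ZMod 16) + 6) = 14 from by decide, show ((9:ZMod 16) + 6) = 15 from by decide,
    show ((10:ZMod 16) + 6) = 0 from by decide, show ((11:ZMod 16) + 6) = 1 from by decide,
    show ((12:ZMod 16) + 6) = 2 from by decide, show ((13:ZMod 16) + 6) = 3 from by decide,
    show ((14:ZMod 16) + 6) = 4 from by decide, show ((15:ZMod 16) + 6) = 5 from by decide,
    add_zero] at hexp
  have hexp2 : ∑ j : ZMod 16, h (j₀ + j + 6) * h (j₀ + j)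
      = ∑ j : ZMod 16, h (j₀ + (j + 6)) * h (j₀ + j) := by
    apply Finset.sum_congr rfl; intro j _; rw [add_assoc]
  rw [hexp2, hexp, q1, q2, q3, q4, q5, q6, q7, q8, q9, q10, q11, q12, q13, q14, q15] at hshift
  rw [hc6] at hshift
  have h4 : (4:ℤ) = 0 := by linear_combination (-1 : ℤ) * hshift - 4 * hsq j₀
  norm_num at h4

private lemma squareCase (m S : ℤ) (hm2 : 2 ≤ m) (hmle : m ≤ 4) (hS : S * S = 4*m) :
    m = 4 := by
  have hSle : S ≤ 4 := by nlinarith [sq_nonneg (S - 4)]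
  have hSge : -4 ≤ S := by nlinarith [sq_nonneg (S + 4)]
  interval_cases S <;> omega

set_option maxHeartbeats 1000000 in
theorem stmt4 (n m : ℕ) [NeZero n] (h : ZMod n → ℤ)
    (hn : n = 4 * m) (hm : 1 < m)
    (hsign : signRow n h) (halpha : alpha1 n h = 1) :
    ∃ s : ZMod n, s ≠ 0 ∧ ∑ j : ZMod n, h j * h (j - s) ≠ 0 := by
  by_contra hcon0
  push_neg at hcon0
  have hcon : ∀ s : ZMod n, s ≠ 0 → ∑ j : ZMod n, h j * h (j - s) = 0 := hcon0
  haveI : Fact (1 < n) := ⟨by omega⟩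
  set D : ZMod n → ℤ := fun j => if h (j + 1) = h j then 0 else 1 with hDdef
  have hD01 : ∀ j, D j = 0 ∨ D j = 1 := by
    intro j; by_cases hx : h (j + 1) = h j <;> simp [hDdef, hx]
  have hDiff : ∀ j : ZMod n, D j = 1 ↔ h (j+1) ≠ h j := by
    intro j; by_cases hx : h (j + 1) = h j <;> simp [hDdef, hx]
  have hsq : ∀ j, h j * h j = 1 := by
    intro j; rcases hsign j with e | e <;> rw [e] <;> norm_num
  have hDh : ∀ j, h (j + 1) * h j = 1 - 2 * D j := by
    intro j
    rcases hsign (j+1) with e1 | e1 <;> rcases hsign j with e2 | e2 <;>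
      simp [hDdef, e1, e2]
  have hD1 : ∀ j, D j = 1 → h (j + 1) = - h j := by
    intro j hj
    have e := hDh j; rw [hj] at e
    rcases hsign (j+1) with e1 | e1 <;> rcases hsign j with e2 | e2 <;>
      rw [e1, e2] at e ⊢ <;> omega
  have hD0 : ∀ j, D j = 0 → h (j + 1) = h j := by
    intro j hj
    have e := hDh j; rw [hj] at e
    rcases hsign (j+1) with e1 | e1 <;> rcases hsign j with e2 | e2 <;>
      rw [e1, e2] at e ⊢ <;> omega
  have hcF : ∀ s : ZMod n, s ≠ 0 → ∑ j : ZMod n, h (j + s) * h j = 0 := by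
    intro s hs
    have h1 : ∑ j : ZMod n, h (j + s) * h j
        = ∑ j : ZMod n, h (j + s) * h (j + s - s) := by
      apply Finset.sum_congr rfl; intro j _; rw [add_sub_cancel_right]
    rw [h1, sumShiftR (fun j => h j * h (j - s)) s]
    exact hcon s hs
  have hne : ∀ k : ℕ, 0 < k → k < n → ((k : ℕ) : ZMod n) ≠ 0 := by
    intro k hk hkn hz
    rw [ZMod.natCast_eq_zero_iff] at hz
    exact absurd (Nat.le_of_dvd hk hz) (by omega)
  have h1ne : (1 : ZMod n) ≠ 0 := one_ne_zero
  have h2ne : (2 : ZMod n) ≠ 0 := by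
    have := hne 2 (by norm_num) (by omega); rwa [Nat.cast_ofNat] at this
  have h3ne : (3 : ZMod n) ≠ 0 := by
    have := hne 3 (by norm_num) (by omega); rwa [Nat.cast_ofNat] at this
  have h4ne : (4 : ZMod n) ≠ 0 := by
    have := hne 4 (by norm_num) (by omega); rwa [Nat.cast_ofNat] at this
  -- product chains
  have hDh2 : ∀ j : ZMod n, h (j+2) * h j = (1 - 2*D (j+1)) * (1 - 2*D j) := by
    intro j
    have t1 := hDh (j+1); rw [show j+1+1 = j+2 from by ring] at t1
    have t2 := hDh j
    have q := hsq (j+1)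
    linear_combination (1 - 2*D j) * t1 + (h (j+2) * h (j+1)) * t2 - (h (j+2) * h j) * q
  have hDh3 : ∀ j : ZMod n, h (j+3) * h j
      = (1 - 2*D (j+2)) * ((1 - 2*D (j+1)) * (1 - 2*D j)) := by
    intro j
    have t1 := hDh (j+2); rw [show j+2+1 = j+3 from by ring] at t1
    have u := hDh2 j
    have q := hsq (j+2)
    linear_combination ((1 - 2*D (j+1)) * (1 - 2*D j)) * t1 + (h (j+3) * h (j+2)) * u
      - (h (j+3) * h j) * q
  have hDh4 : ∀ j : ZMod n, h (j+4) * h j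
      = (1 - 2*D (j+3)) * ((1 - 2*D (j+2)) * ((1 - 2*D (j+1)) * (1 - 2*D j))) := by
    intro j
    have t1 := hDh (j+3); rw [show j+3+1 = j+4 from by ring] at t1
    have u := hDh3 j
    have q := hsq (j+3)
    linear_combination ((1 - 2*D (j+2)) * ((1 - 2*D (j+1)) * (1 - 2*D j))) * t1
      + (h (j+4) * h (j+3)) * u - (h (j+4) * h j) * q
  have hcard : (Finset.univ : Finset (ZMod n)).card = n := by
    rw [Finset.card_univ, ZMod.card]
  have hSn : ∑ _j : ZMod n, (1:ℤ) = (n:ℤ) := by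
    rw [Finset.sum_const, hcard, nsmul_eq_mul, mul_one]
  have hncast : ((n:ℕ):ℤ) = 4*(m:ℤ) := by rw [hn]; push_cast; ring
  have sh_a1 : ∑ j : ZMod n, D (j+1) = ∑ j : ZMod n, D j := sumShiftR D 1
  have hv1 : ∑ j : ZMod n, D j = 2*(m:ℤ) := by
    have e := hcF 1 h1ne
    have e2 : ∑ j : ZMod n, h (j+1) * h j = ∑ j : ZMod n, ((1:ℤ) - 2*D j) :=
      Finset.sum_congr rfl fun j _ => by rw [hDh j]
    rw [e2] at e
    simp only [Finset.sum_sub_distrib, ← Finset.mul_sum] at e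
    rw [hSn, hncast] at e
    linarith
  have hv2 : ∑ j : ZMod n, D j * D (j+1) = (m:ℤ) := by
    have e := hcF 2 h2ne
    have e2 : ∑ j : ZMod n, h (j+2) * h j
        = ∑ j : ZMod n, ((1:ℤ) - 2*D j - 2*D (j+1) + 4*(D j * D (j+1))) :=
      Finset.sum_congr rfl fun j _ => by rw [hDh2 j]; ring
    rw [e2] at e
    simp only [Finset.sum_add_distrib, Finset.sum_sub_distrib, ← Finset.mul_sum] at e
    rw [hSn, hncast, sh_a1, hv1] at e
    linarith
  have sh_a2 : ∑ j : ZMod n, D (j+2) = ∑ j : ZMod n, D j := sumShiftR D 2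
  have sh_a3 : ∑ j : ZMod n, D (j+3) = ∑ j : ZMod n, D j := sumShiftR D 3
  have sh_b12 : ∑ j : ZMod n, D (j+1) * D (j+2) = ∑ j : ZMod n, D j * D (j+1) :=
    sumShift' (fun k => D k * D (k+1)) _ 1 (fun j => by
      show D (j+1) * D (j+2) = D (j+1) * D (j+1+1)
      rw [show (j+1+1 : ZMod n) = j + 2 from by ring])
  have sh_b23 : ∑ j : ZMod n, D (j+2) * D (j+3) = ∑ j : ZMod n, D j * D (j+1) :=
    sumShift' (fun k => D k * D (k+1)) _ 2 (fun j => by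
      show D (j+2) * D (j+3) = D (j+2) * D (j+2+1)
      rw [show (j+2+1 : ZMod n) = j + 3 from by ring])
  have sh_b13 : ∑ j : ZMod n, D (j+1) * D (j+3) = ∑ j : ZMod n, D j * D (j+2) :=
    sumShift' (fun k => D k * D (k+2)) _ 1 (fun j => by
      show D (j+1) * D (j+3) = D (j+1) * D (j+1+2)
      rw [show (j+1+2 : ZMod n) = j + 3 from by ring])
  have sh_c1 : ∑ j : ZMod n, D (j+1) * D (j+2) * D (j+3)
      = ∑ j : ZMod n, D j * D (j+1) * D (j+2) :=
    sumShift' (fun k => D k * D (k+1) * D (k+2)) _ 1 (fun j => by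
      show D (j+1) * D (j+2) * D (j+3) = D (j+1) * D (j+1+1) * D (j+1+2)
      rw [show (j+1+1 : ZMod n) = j + 2 from by ring,
        show (j+1+2 : ZMod n) = j + 3 from by ring])
  have hv3 : ∑ j : ZMod n, D j * D (j+2) = 2 * ∑ j : ZMod n, D j * D (j+1) * D (j+2) := by
    have e := hcF 3 h3ne
    have e2 : ∑ j : ZMod n, h (j+3) * h j
        = ∑ j : ZMod n, ((1:ℤ) - 2*D j - 2*D (j+1) - 2*D (j+2)
          + 4*(D j * D (j+1)) + 4*(D (j+1) * D (j+2)) + 4*(D j * D (j+2))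
          - 8*(D j * D (j+1) * D (j+2))) :=
      Finset.sum_congr rfl fun j _ => by rw [hDh3 j]; ring
    rw [e2] at e
    simp only [Finset.sum_add_distrib, Finset.sum_sub_distrib, ← Finset.mul_sum] at e
    rw [hSn, hncast, sh_a1, sh_a2, sh_b12, hv1, hv2] at e
    linarith
  have hv4 : ∑ j : ZMod n, D j * D (j+3)
      = 2 * (∑ j : ZMod n, D j * D (j+1) * D (j+3))
        + 2 * (∑ j : ZMod n, D j * D (j+2) * D (j+3))
        - 4 * (∑ j : ZMod n, D j * D (j+1) * D (j+2) * D (j+3)) := by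
    have e := hcF 4 h4ne
    have e2 : ∑ j : ZMod n, h (j+4) * h j
        = ∑ j : ZMod n, ((1:ℤ) - 2*D j - 2*D (j+1) - 2*D (j+2) - 2*D (j+3)
          + 4*(D j * D (j+1)) + 4*(D (j+1) * D (j+2)) + 4*(D (j+2) * D (j+3))
          + 4*(D j * D (j+2)) + 4*(D (j+1) * D (j+3)) + 4*(D j * D (j+3))
          - 8*(D j * D (j+1) * D (j+2)) - 8*(D (j+1) * D (j+2) * D (j+3))
          - 8*(D j * D (j+1) * D (j+3)) - 8*(D j * D (j+2) * D (j+3))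
          + 16*(D j * D (j+1) * D (j+2) * D (j+3))) :=
      Finset.sum_congr rfl fun j _ => by rw [hDh4 j]; ring
    rw [e2] at e
    simp only [Finset.sum_add_distrib, Finset.sum_sub_distrib, ← Finset.mul_sum] at e
    rw [hSn, hncast, sh_a1, sh_a2, sh_a3, sh_b12, sh_b23, sh_b13, sh_c1, hv1, hv2, hv3] at e
    linarith
  -- alpha-based counting
  have hidem : ∀ j : ZMod n, D j * D j = D j := by
    intro j; rcases hD01 j with e | e <;> rw [e] <;> norm_num
  have hOBiff : ∀ j : ZMod n, oneBlock n h j ↔ (D (j-1) = 1 ∧ D j = 1) := by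
    intro j
    have e1 := hDiff (j-1); rw [sub_add_cancel] at e1
    have e2 := hDiff j
    unfold oneBlock
    constructor
    · rintro ⟨a, b⟩
      constructor
      · first | exact e1.2 a | exact e1.2 (Ne.symm a)
      · first | exact e2.2 b | exact e2.2 (Ne.symm b)
    · rintro ⟨a, b⟩
      constructor
      · first | exact e1.1 a | exact Ne.symm (e1.1 a)
      · first | exact e2.1 b | exact Ne.symm (e2.1 b)
  have halphasum : ∑ j : ZMod n, (if oneRunStart n h j then (1:ℤ) else 0) = 1 := by
    rw [Finset.sum_boole]
    unfold alpha1 at halpha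
    rw [halpha]; norm_num
  have hors : ∀ j : ZMod n, oneRunStart n h (j+2)
      ↔ ((D (j+1) = 1 ∧ D (j+2) = 1) ∧ ¬(D j = 1 ∧ D (j+1) = 1)) := by
    intro j
    have o1 := hOBiff (j+2); rw [show j+2-1 = j+1 from by ring] at o1
    have o2 := hOBiff (j+1); rw [add_sub_cancel_right] at o2
    unfold oneRunStart
    rw [show j+2-1 = j+1 from by ring, o1, o2]
  have hind : ∀ j : ZMod n,
      D (j+1) * D (j+2) * (1 - D j * D (j+1))
        = (if oneRunStart n h (j+2) then (1:ℤ) else 0) := by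
    intro j
    rcases hD01 j with e | e <;> rcases hD01 (j+1) with e1 | e1 <;>
      rcases hD01 (j+2) with e2 | e2 <;>
      simp [hors j, e, e1, e2]
  have halpha2 : ∑ j : ZMod n, D (j+1) * D (j+2) * (1 - D j * D (j+1)) = 1 := by
    rw [Finset.sum_congr rfl (fun j _ => hind j)]
    rw [sumShift' (fun k => if oneRunStart n h k then (1:ℤ) else 0) _ 2 (fun j => rfl)]
    exact halphasum
  have hT11 : ∑ j : ZMod n, D j * D (j+1) * D (j+2) = (m:ℤ) - 1 := by
    have e : ∀ j : ZMod n, D (j+1) * D (j+2) * (1 - D j * D (j+1))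
        = D (j+1) * D (j+2) - D j * (D (j+1) * D (j+2)) := by
      intro j
      linear_combination (-(D j * D (j+2))) * hidem (j+1)
    rw [Finset.sum_congr rfl (fun j _ => e j), Finset.sum_sub_distrib, sh_b12] at halpha2
    have e3 : ∑ j : ZMod n, D j * (D (j+1) * D (j+2))
        = ∑ j : ZMod n, D j * D (j+1) * D (j+2) :=
      Finset.sum_congr rfl (fun j _ => by ring)
    rw [e3] at halpha2
    linarith [hv2]
  have hRE : ∑ j : ZMod n, D j * D (j+1) * (1 - D (j+2)) = 1 := by
    have e : ∀ j : ZMod n, D j * D (j+1) * (1 - D (j+2))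
        = D j * D (j+1) - D j * D (j+1) * D (j+2) := fun j => by ring
    rw [Finset.sum_congr rfl (fun j _ => e j), Finset.sum_sub_distrib, hv2, hT11]
    ring
  have hRS : ∑ j : ZMod n, (1 - D j) * D (j+1) * D (j+2) = 1 := by
    have e : ∀ j : ZMod n, (1 - D j) * D (j+1) * D (j+2)
        = D (j+1) * D (j+2) - D j * D (j+1) * D (j+2) := fun j => by ring
    rw [Finset.sum_congr rfl (fun j _ => e j), Finset.sum_sub_distrib, sh_b12, hv2, hT11]
    ring
  have hYle : ∑ j : ZMod n, D j * D (j+1) * D (j+2) * (1 - D (j+3))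
      ≤ ∑ j : ZMod n, D (j+1) * D (j+2) * (1 - D (j+3)) := by
    apply Finset.sum_le_sum
    intro j _
    rcases hD01 j with e | e <;> rcases hD01 (j+1) with e1 | e1 <;>
      rcases hD01 (j+2) with e2 | e2 <;> rcases hD01 (j+3) with e3 | e3 <;>
      rw [e, e1, e2, e3] <;> norm_num
  have shRE : ∑ j : ZMod n, D (j+1) * D (j+2) * (1 - D (j+3))
      = ∑ j : ZMod n, D j * D (j+1) * (1 - D (j+2)) :=
    sumShift' (fun k => D k * D (k+1) * (1 - D (k+2))) _ 1 (fun j => by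
      show D (j+1) * D (j+2) * (1 - D (j+3)) = D (j+1) * D (j+1+1) * (1 - D (j+1+2))
      rw [show (j+1+1 : ZMod n) = j + 2 from by ring,
        show (j+1+2 : ZMod n) = j + 3 from by ring])
  have hYsplit : ∑ j : ZMod n, D j * D (j+1) * D (j+2) * (1 - D (j+3))
      = (∑ j : ZMod n, D j * D (j+1) * D (j+2))
        - ∑ j : ZMod n, D j * D (j+1) * D (j+2) * D (j+3) := by
    rw [← Finset.sum_sub_distrib]
    exact Finset.sum_congr rfl (fun j _ => by ring)
  have hQ4ge : (m:ℤ) - 2 ≤ ∑ j : ZMod n, D j * D (j+1) * D (j+2) * D (j+3) := by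
    have e := hYle
    rw [shRE, hRE] at e
    rw [hYsplit, hT11] at e
    linarith
  have hasplit : ∑ j : ZMod n, D j * D (j+1) * (1 - D (j+2)) * D (j+3)
      = (∑ j : ZMod n, D j * D (j+1) * D (j+3))
        - ∑ j : ZMod n, D j * D (j+1) * D (j+2) * D (j+3) := by
    rw [← Finset.sum_sub_distrib]
    exact Finset.sum_congr rfl (fun j _ => by ring)
  have hale : ∑ j : ZMod n, D j * D (j+1) * (1 - D (j+2)) * D (j+3)
      ≤ ∑ j : ZMod n, D j * D (j+1) * (1 - D (j+2)) := by
    apply Finset.sum_le_sum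
    intro j _
    rcases hD01 j with e | e <;> rcases hD01 (j+1) with e1 | e1 <;>
      rcases hD01 (j+2) with e2 | e2 <;> rcases hD01 (j+3) with e3 | e3 <;>
      rw [e, e1, e2, e3] <;> norm_num
  have hbsplit : ∑ j : ZMod n, D j * (1 - D (j+1)) * D (j+2) * D (j+3)
      = (∑ j : ZMod n, D j * D (j+2) * D (j+3))
        - ∑ j : ZMod n, D j * D (j+1) * D (j+2) * D (j+3) := by
    rw [← Finset.sum_sub_distrib]
    exact Finset.sum_congr rfl (fun j _ => by ring)
  have shRS : ∑ j : ZMod n, (1 - D (j+1)) * D (j+2) * D (j+3)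
      = ∑ j : ZMod n, (1 - D j) * D (j+1) * D (j+2) :=
    sumShift' (fun k => (1 - D k) * D (k+1) * D (k+2)) _ 1 (fun j => by
      show (1 - D (j+1)) * D (j+2) * D (j+3) = (1 - D (j+1)) * D (j+1+1) * D (j+1+2)
      rw [show (j+1+1 : ZMod n) = j + 2 from by ring,
        show (j+1+2 : ZMod n) = j + 3 from by ring])
  have hble : ∑ j : ZMod n, D j * (1 - D (j+1)) * D (j+2) * D (j+3)
      ≤ ∑ j : ZMod n, (1 - D (j+1)) * D (j+2) * D (j+3) := by
    apply Finset.sum_le_sum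
    intro j _
    rcases hD01 j with e | e <;> rcases hD01 (j+1) with e1 | e1 <;>
      rcases hD01 (j+2) with e2 | e2 <;> rcases hD01 (j+3) with e3 | e3 <;>
      rw [e, e1, e2, e3] <;> norm_num
  have hB3split : ∑ j : ZMod n, D j * (1 - D (j+1)) * (1 - D (j+2)) * D (j+3)
      = (∑ j : ZMod n, D j * D (j+3))
        - (∑ j : ZMod n, D j * D (j+1) * D (j+3))
        - (∑ j : ZMod n, D j * D (j+2) * D (j+3))
        + ∑ j : ZMod n, D j * D (j+1) * D (j+2) * D (j+3) := by
    rw [← Finset.sum_sub_distrib, ← Finset.sum_sub_distrib, ← Finset.sum_add_distrib]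
    exact Finset.sum_congr rfl (fun j _ => by ring)
  have hB3ge : (0:ℤ) ≤ ∑ j : ZMod n, D j * (1 - D (j+1)) * (1 - D (j+2)) * D (j+3) := by
    apply Finset.sum_nonneg
    intro j _
    rcases hD01 j with e | e <;> rcases hD01 (j+1) with e1 | e1 <;>
      rcases hD01 (j+2) with e2 | e2 <;> rcases hD01 (j+3) with e3 | e3 <;>
      rw [e, e1, e2, e3] <;> norm_num
  rw [shRE, hRE] at hYle
  rw [hRE] at hale
  rw [shRS, hRS] at hble
  rw [hB3split] at hB3ge
  rw [hasplit] at hale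
  rw [hbsplit] at hble
  have hm_le4 : (m:ℤ) ≤ 4 := by linarith
  -- the square of the row sum
  have hsq4m : (∑ j : ZMod n, h j) * (∑ j : ZMod n, h j) = 4*(m:ℤ) := by
    have swap : ∑ s : ZMod n, ∑ j : ZMod n, h j * h (j - s)
        = (∑ j : ZMod n, h j) * (∑ j : ZMod n, h j) := by
      rw [Finset.sum_comm]
      have e1 : ∀ j : ZMod n, ∑ s : ZMod n, h j * h (j - s)
          = h j * ∑ j' : ZMod n, h j' := by
        intro j
        rw [← Finset.mul_sum]
        congr 1
        exact Fintype.sum_equiv (Equiv.subLeft j) _ _ (fun s => rfl)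
      rw [Finset.sum_congr rfl (fun j _ => e1 j), ← Finset.sum_mul]
    have single : ∑ s : ZMod n, ∑ j : ZMod n, h j * h (j - s) = (n:ℤ) := by
      rw [Finset.sum_eq_single (0 : ZMod n) (fun s _ hs => hcon s hs)
        (fun habs => absurd (Finset.mem_univ 0) habs)]
      have e1 : ∀ j : ZMod n, h j * h (j - 0) = 1 := fun j => by
        rw [sub_zero]; exact hsq j
      rw [Finset.sum_congr rfl (fun j _ => e1 j), hSn]
    rw [single, hncast] at swap
    linarith
  have hm4 : m = 4 := by
    have hm2 : (2:ℤ) ≤ (m:ℤ) := by exact_mod_cast hm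
    have := squareCase (m:ℤ) (∑ j : ZMod n, h j) hm2 hm_le4 hsq4m
    exact_mod_cast this
  have ha1 : ∑ j : ZMod n, D j * D (j+1) * (1 - D (j+2)) * D (j+3) = 1 := by
    rw [hasplit]
    have : (m:ℤ) = 4 := by exact_mod_cast hm4
    linarith
  have hb1 : ∑ j : ZMod n, D j * (1 - D (j+1)) * D (j+2) * D (j+3) = 1 := by
    rw [hbsplit]
    have : (m:ℤ) = 4 := by exact_mod_cast hm4
    linarith
  subst hm4
  have hn16 : n = 16 := by omega
  subst hn16
  norm_num at hv1 hv2 hT11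
  have hv3' : ∑ j : ZMod 16, D j * D (j+2) = 6 := by
    rw [hv3, hT11]; norm_num
  obtain ⟨j₀, hd0, hd1, hd2, hd3, hd4, hd5, hd6, hd12, hd13, hd14, hd15, hAB⟩ :=
    keyStructure h D hD01 hDiff halpha hv1 hv2 hv3' hRE ha1 hb1
  rcases hAB with ⟨hd7, hd8, hd9, hd10, hd11⟩ | ⟨hd7, hd8, hd9, hd10, hd11⟩
  · exact finalA h D j₀ hsq hD1 hD0 hcF hd0 hd1 hd2 hd3 hd4 hd5 hd6 hd7 hd8 hd9
      hd10 hd11 hd12 hd13 hd14 hd15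
  · exact finalB h D j₀ hsq hD1 hD0 hcF hd0 hd1 hd2 hd3 hd4 hd5 hd6 hd7 hd8 hd9
      hd10 hd11 hd12 hd13 hd14 hd15
end

section
/- There is no circulant Hadamard matrix of order n = 4m with m > 1 whose defining row has exactly two maximal runs of consecutive size-1 blocks (α₁ = 2). -/
open Finset
open scoped Classical

set_option maxHeartbeats 2000000

namespace CHM

lemma sum_shift {n : ℕ} [NeZero n] (F : ZMod n → ℤ) (c : ZMod n) :
    ∑ j : ZMod n, F (j + c) = ∑ j : ZMod n, F j :=
  Fintype.sum_equiv (Equiv.addRight c) _ _ (fun _ => rfl)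

lemma hsq {n : ℕ} {h : ZMod n → ℤ} (hsign : signRow n h) (j : ZMod n) :
    h j * h j = 1 := by rcases hsign j with e | e <;> rw [e] <;> norm_num

lemma telescope {n : ℕ} [NeZero n] {h : ZMod n → ℤ} (hsign : signRow n h)
    (s : ℕ) (j : ZMod n) :
    ∏ t ∈ Finset.range s, (h (j + (t : ZMod n)) * h (j + (t : ZMod n) + 1)) =
      h j * h (j + (s : ZMod n)) := by
  induction s with
  | zero => simp [hsq hsign j]
  | succ s ih =>
    rw [Finset.prod_range_succ, ih]
    have e : h j * h (j + (s : ZMod n)) * (h (j + (s : ZMod n)) * h (j + (s : ZMod n) + 1))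
        = h j * ((h (j + (s : ZMod n)) * h (j + (s : ZMod n))) * h (j + (s : ZMod n) + 1)) := by
      ring
    rw [e, hsq hsign, one_mul]
    push_cast
    ring_nf

lemma corr_prod {n : ℕ} [NeZero n] {h : ZMod n → ℤ} (hsign : signRow n h)
    (hH : hadamardRow n h) (s : ℕ) (hs : (s : ZMod n) ≠ 0) :
    ∑ j : ZMod n, ∏ t ∈ Finset.range s, (h (j + (t : ZMod n)) * h (j + (t : ZMod n) + 1)) = 0 := by
  have key := hH (-(s : ZMod n)) (by simpa using hs)
  have e : ∑ j : ZMod n, h j * h (j + (s : ZMod n)) = 0 := by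
    simpa [sub_neg_eq_add] using key
  calc ∑ j : ZMod n, ∏ t ∈ Finset.range s, (h (j + (t : ZMod n)) * h (j + (t : ZMod n) + 1))
      = ∑ j : ZMod n, h j * h (j + (s : ZMod n)) :=
        Finset.sum_congr rfl (fun j _ => telescope hsign s j)
    _ = 0 := e

lemma cast_ne_zero_of_lt {n s : ℕ} [NeZero n] (h0 : 0 < s) (hlt : s < n) :
    (s : ZMod n) ≠ 0 := by
  rw [Ne, ZMod.natCast_eq_zero_iff]
  intro hdvd
  exact absurd (Nat.le_of_dvd h0 hdvd) (by omega)

/-- sum over `ZMod n` as a sum over `range n` of the values at `val`. -/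
lemma sum_val {n : ℕ} [NeZero n] (G : ℕ → ℤ) :
    ∑ j : ZMod n, G (ZMod.val j) = ∑ k ∈ Finset.range n, G k := by
  refine Finset.sum_nbij' (fun j => ZMod.val j) (fun k => (k : ZMod n)) ?_ ?_ ?_ ?_ ?_
  · intro j _
    exact Finset.mem_range.2 (ZMod.val_lt j)
  · intro k _
    exact Finset.mem_univ _
  · intro j _
    exact ZMod.natCast_rightInverse j
  · intro k hk
    exact ZMod.val_cast_of_lt (Finset.mem_range.1 hk)
  · intro j _
    rfl

/-- the 16-bit checker -/
def bitsum16 (v : Nat) : Nat :=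
  v % 2 + v / 2 % 2 + v / 4 % 2 + v / 8 % 2 + v / 16 % 2 + v / 32 % 2 +
  v / 64 % 2 + v / 128 % 2 + v / 256 % 2 + v / 512 % 2 + v / 1024 % 2 +
  v / 2048 % 2 + v / 4096 % 2 + v / 8192 % 2 + v / 16384 % 2 + v / 32768 % 2

def x2of (x : Nat) : Nat := x ||| (x <<< 16)

def pch (y : Nat) : Nat → Nat
  | 0 => 0
  | s + 1 => pch y s ^^^ (y >>> s)

def check (x : Nat) : Bool :=
  bitsum16 (pch (x2of x) 1) != 8 || bitsum16 (pch (x2of x) 2) != 8 ||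
  bitsum16 (pch (x2of x) 3) != 8 || bitsum16 (pch (x2of x) 4) != 8 ||
  bitsum16 (pch (x2of x) 5) != 8 || bitsum16 (pch (x2of x) 6) != 8 ||
  bitsum16 (pch (x2of x) 7) != 8 || bitsum16 (pch (x2of x) 8) != 8

def cr : Nat → Nat → Nat → Bool
  | 0, _, _ => false
  | _+1, _, 0 => true
  | _+1, lo, 1 => check (4 * lo + 3)
  | f+1, lo, (n+2) =>
      cr f lo ((n+2)/2) && cr f (lo + (n+2)/2) ((n+2) - (n+2)/2)

theorem cr_sound : ∀ f lo size, cr f lo size = true →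
    ∀ i, i < size → check (4 * (lo + i) + 3) = true := by
  intro f
  induction f with
  | zero => intro lo size h i hi; rcases size with _ | _ | size <;> simp [cr] at h hi <;> omega
  | succ f ih =>
    intro lo size h i hi
    match size, hi with
    | 1, hi =>
      have : i = 0 := by omega
      subst this
      simpa [cr] using h
    | (n+2), hi =>
      rw [show cr (f+1) lo (n+2) = (cr f lo ((n+2)/2) && cr f (lo + (n+2)/2) ((n+2) - (n+2)/2))
        from rfl, Bool.and_eq_true] at h
      rcases Nat.lt_or_ge i ((n+2)/2) with hlt | hge
      · exact ih lo _ h.1 i hlt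
      · have := ih (lo + (n+2)/2) _ h.2 (i - (n+2)/2) (by omega)
        rwa [show lo + (n+2)/2 + (i - (n+2)/2) = lo + i by omega] at this

lemma bitsum16_eq (p : ℕ) :
    bitsum16 p = ∑ k ∈ Finset.range 16, (if p.testBit k then 1 else 0) := by
  have bit : ∀ k : ℕ, (if p.testBit k then (1:ℕ) else 0) = p / 2^k % 2 := by
    intro k
    rw [Nat.testBit_eq_decide_div_mod_eq]
    rcases Nat.mod_two_eq_zero_or_one (p / 2^k) with e | e <;> simp [e]
  unfold bitsum16
  simp only [Finset.sum_range_succ, Finset.sum_range_zero, bit]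
  norm_num

lemma partC {h : ZMod 16 → ℤ} (hsign : signRow 16 h) (hH : hadamardRow 16 h)
    (halpha : alpha1 16 h = 2) : False := by
  classical
  -- find a one-run start and rotate it to position 1
  have hne : (Finset.univ.filter fun j => oneRunStart 16 h j).Nonempty := by
    apply Finset.card_pos.1
    unfold alpha1 at halpha
    rw [halpha]
    norm_num
  obtain ⟨j₀, hj₀mem⟩ := hne
  have hj₀ : oneRunStart 16 h j₀ := (Finset.mem_filter.1 hj₀mem).2
  obtain ⟨⟨n1, n2⟩, nb⟩ := hj₀
  set c : ZMod 16 := j₀ - 1 with hc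
  set h' : ZMod 16 → ℤ := fun k => h (k + c) with hh'
  have hsign' : signRow 16 h' := fun j => hsign _
  have hH' : hadamardRow 16 h' := by
    intro s hs
    have e : ∀ j : ZMod 16, h' j * h' (j - s) = (fun k => h k * h (k - s)) (j + c) := by
      intro j
      simp only [hh']
      rw [sub_add_eq_add_sub]
    calc ∑ j : ZMod 16, h' j * h' (j - s)
        = ∑ j : ZMod 16, (fun k => h k * h (k - s)) (j + c) := Finset.sum_congr rfl fun j _ => e j
      _ = ∑ j : ZMod 16, h j * h (j - s) := by exact sum_shift (fun k => h k * h (k - s)) c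
      _ = 0 := hH s hs
  -- the three known boundary bits
  have b0 : h' 0 ≠ h' 1 := by
    have e0 : (0 : ZMod 16) + c = j₀ - 1 := by rw [hc]; ring
    have e1 : (1 : ZMod 16) + c = j₀ := by rw [hc]; ring
    simp only [hh', e0, e1]
    exact fun e => n1 e.symm
  have b1 : h' 1 ≠ h' 2 := by
    have e1 : (1 : ZMod 16) + c = j₀ := by rw [hc]; ring
    have e2 : (2 : ZMod 16) + c = j₀ + 1 := by rw [hc]; ring
    simp only [hh', e1, e2]
    exact n2
  have b15 : h' 15 = h' 0 := by
    have e15 : (15 : ZMod 16) + c = j₀ - 2 := by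
      rw [hc, show (15 : ZMod 16) = -1 by decide]; ring
    have e0 : (0 : ZMod 16) + c = j₀ - 1 := by rw [hc]; ring
    simp only [hh', e15, e0]
    by_contra hne'
    apply nb
    constructor
    · rw [show j₀ - 1 - 1 = j₀ - 2 by ring]
      exact fun e => hne' e.symm
    · rw [show j₀ - 1 + 1 = j₀ by ring]
      exact fun e => n1 e.symm
  -- the bit vector and its encoding
  set v : ℕ → Bool := fun r => decide (h' ((r : ℕ) : ZMod 16) ≠ h' (((r : ℕ) : ZMod 16) + 1))
    with hv
  have vmod : ∀ r : ℕ, v (r % 16) = v r := by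
    intro r
    simp only [hv, ZMod.natCast_mod]
  set w : ℕ → ℕ := fun r => cond (v r) 1 0 with hw
  have wcases : ∀ r, w r ≤ 1 := by
    intro r
    rcases Bool.dichotomy (v r) with e | e <;> simp [hw, e]
  set x : ℕ := w 0 + 2*w 1 + 4*w 2 + 8*w 3 + 16*w 4 + 32*w 5 + 64*w 6 + 128*w 7 + 256*w 8 +
    512*w 9 + 1024*w 10 + 2048*w 11 + 4096*w 12 + 8192*w 13 + 16384*w 14 + 32768*w 15 with hx
  have W0 := wcases 0; have W1 := wcases 1; have W2 := wcases 2; have W3 := wcases 3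
  have W4 := wcases 4; have W5 := wcases 5; have W6 := wcases 6; have W7 := wcases 7
  have W8 := wcases 8; have W9 := wcases 9; have W10 := wcases 10; have W11 := wcases 11
  have W12 := wcases 12; have W13 := wcases 13; have W14 := wcases 14; have W15 := wcases 15
  have xdiv : ∀ k, k < 16 → x / 2^k % 2 = w k := by
    intro k hk
    interval_cases k <;> norm_num <;> omega
  have xlt : x < 65536 := by omega
  have tb : ∀ k, k < 16 → x.testBit k = v k := by
    intro k hk
    rw [Nat.testBit_eq_decide_div_mod_eq, xdiv k hk]
    rcases Bool.dichotomy (v k) with e | e <;> simp [hw, e]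
  have tb2 : ∀ r, r < 32 → (x2of x).testBit r = v (r % 16) := by
    intro r hr
    unfold x2of
    rw [Nat.testBit_or, Nat.testBit_shiftLeft]
    by_cases h16 : r < 16
    · have d : decide (16 ≤ r) = false := by simp; omega
      rw [d, tb r h16]
      simp [Nat.mod_eq_of_lt h16]
    · have d : decide (16 ≤ r) = true := by simp; omega
      have e0 : x.testBit r = false := Nat.testBit_lt_two_pow (by
        calc x < 65536 := xlt
          _ = 2 ^ 16 := by norm_num
          _ ≤ 2 ^ r := Nat.pow_le_pow_right (by norm_num) (by omega))
      rw [d, e0, tb (r - 16) (by omega)]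
      have : r % 16 = r - 16 := by omega
      rw [this]
      simp
  -- the factor bridge
  have factor_eq : ∀ r : ℕ, h' ((r : ℕ) : ZMod 16) * h' (((r : ℕ) : ZMod 16) + 1)
      = if v r then (-1 : ℤ) else 1 := by
    intro r
    by_cases e : h' ((r : ℕ) : ZMod 16) = h' (((r : ℕ) : ZMod 16) + 1)
    · have : v r = false := by simp [hv, e]
      rw [this]
      simp only [if_neg Bool.false_ne_true]
      rw [← e, hsq hsign']
    · have : v r = true := by simp [hv]; exact e
      rw [this, if_pos rfl]
      rcases hsign' ((r : ℕ) : ZMod 16) with e1 | e1 <;>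
        rcases hsign' (((r : ℕ) : ZMod 16) + 1) with e2 | e2 <;>
          simp [e1, e2] at e ⊢
  -- products expressed through testBits of the parity chain
  have prodbit : ∀ s, s ≤ 8 → ∀ j, j < 16 →
      (∏ t ∈ Finset.range s,
        (h' (((j : ℕ) : ZMod 16) + ((t : ℕ) : ZMod 16)) *
          h' (((j : ℕ) : ZMod 16) + ((t : ℕ) : ZMod 16) + 1)))
      = (if (pch (x2of x) s).testBit j then (-1 : ℤ) else 1) := by
    intro s
    induction s with
    | zero => intro _ j hj; simp [pch]
    | succ s ih =>
      intro hs j hj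
      rw [Finset.prod_range_succ, ih (by omega) j hj]
      have harg : ((j : ℕ) : ZMod 16) + ((s : ℕ) : ZMod 16) = (((j + s : ℕ)) : ZMod 16) := by
        push_cast; ring
      rw [harg, factor_eq (j + s)]
      have tbi : (pch (x2of x) (s+1)).testBit j
          = ((pch (x2of x) s).testBit j).xor ((x2of x).testBit (s + j)) := by
        simp [pch, Nat.testBit_xor, Nat.testBit_shiftRight]
      rw [tbi, show s + j = j + s from Nat.add_comm s j, tb2 (j + s) (by omega), vmod (j + s)]
      rcases Bool.dichotomy ((pch (x2of x) s).testBit j) with e | e <;>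
        rcases Bool.dichotomy (v (j + s)) with e2 | e2 <;> simp [e, e2]
  -- counting equation for each shift
  have bOK : ∀ s, 1 ≤ s → s ≤ 8 → bitsum16 (pch (x2of x) s) = 8 := by
    intro s h1 h8
    have hne0 : ((s : ℕ) : ZMod 16) ≠ 0 := cast_ne_zero_of_lt (by omega) (by omega)
    have cc := corr_prod hsign' hH' s hne0
    have e1 : ∑ j : ZMod 16, ∏ t ∈ Finset.range s,
          (h' (j + (t : ZMod 16)) * h' (j + (t : ZMod 16) + 1))
        = ∑ k ∈ Finset.range 16, ∏ t ∈ Finset.range s,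
          (h' ((k : ZMod 16) + (t : ZMod 16)) * h' ((k : ZMod 16) + (t : ZMod 16) + 1)) := by
      rw [← sum_val (n := 16) (fun k : ℕ => ∏ t ∈ Finset.range s,
        (h' ((k : ZMod 16) + (t : ZMod 16)) * h' ((k : ZMod 16) + (t : ZMod 16) + 1)))]
      refine Finset.sum_congr rfl fun j _ => ?_
      beta_reduce
      rw [ZMod.natCast_rightInverse j]
    rw [e1] at cc
    have e2 : ∑ k ∈ Finset.range 16, (if (pch (x2of x) s).testBit k then (-1:ℤ) else 1) = 0 := by
      rw [← cc]
      refine Finset.sum_congr rfl fun k hk => ?_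
      exact (prodbit s h8 k (Finset.mem_range.1 hk)).symm
    have e3 : ∀ k ∈ Finset.range 16, (if (pch (x2of x) s).testBit k then (-1:ℤ) else 1)
        = 1 - 2 * ((if (pch (x2of x) s).testBit k then (1:ℕ) else 0) : ℤ) := by
      intro k _
      rcases Bool.dichotomy ((pch (x2of x) s).testBit k) with e | e <;> simp [e]
    rw [Finset.sum_congr rfl e3, Finset.sum_sub_distrib] at e2
    simp only [Finset.sum_const, Finset.card_range, nsmul_eq_mul, mul_one,
      ← Finset.mul_sum] at e2
    have e4 : ((∑ k ∈ Finset.range 16, (if (pch (x2of x) s).testBit k then (1:ℕ) else 0)) : ℤ)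
        = 8 := by
      push_cast at e2 ⊢
      linarith
    have e5 : (∑ k ∈ Finset.range 16, (if (pch (x2of x) s).testBit k then (1:ℕ) else 0)) = 8 :=
      by exact_mod_cast e4
    rw [bitsum16_eq, e5]
  -- now the finite verification
  have hv0 : v 0 = true := by
    simp only [hv, Nat.cast_zero, zero_add, decide_eq_true_eq]
    exact b0
  have hv1 : v 1 = true := by
    simp only [hv, Nat.cast_one, decide_eq_true_eq]
    rw [show (1 : ZMod 16) + 1 = 2 by norm_num]
    exact b1
  have hv15 : v 15 = false := by
    simp only [hv, Nat.cast_ofNat, decide_eq_false_iff_not, not_not]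
    rw [show (15 : ZMod 16) + 1 = 0 by decide]
    exact b15
  have hw0 : w 0 = 1 := by simp [hw, hv0]
  have hw1 : w 1 = 1 := by simp [hw, hv1]
  have hw15 : w 15 = 0 := by simp [hw, hv15]
  have hcr : cr 14 0 8192 = true := by decide
  have hcheck : check x = true := by
    have hy : x / 4 < 8192 := by omega
    have := cr_sound 14 0 8192 hcr (x / 4) hy
    rwa [show 4 * (0 + x / 4) + 3 = x by omega] at this
  have hfalse : check x = false := by
    unfold check
    rw [bOK 1 (by norm_num) (by norm_num), bOK 2 (by norm_num) (by norm_num),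
      bOK 3 (by norm_num) (by norm_num), bOK 4 (by norm_num) (by norm_num),
      bOK 5 (by norm_num) (by norm_num), bOK 6 (by norm_num) (by norm_num),
      bOK 7 (by norm_num) (by norm_num), bOK 8 (by norm_num) (by norm_num)]
    norm_num
  rw [hcheck] at hfalse
  exact absurd hfalse (by norm_num)

-- Part B : the row sum squares to n
lemma sum_sq {n : ℕ} [NeZero n] {h : ZMod n → ℤ} (hsign : signRow n h)
    (hH : hadamardRow n h) : (∑ j : ZMod n, h j) ^ 2 = n := by
  have e1 : ∑ s : ZMod n, ∑ j : ZMod n, h j * h (j - s)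
      = (∑ j : ZMod n, h j) * (∑ j : ZMod n, h j) := by
    rw [Finset.sum_comm]
    calc ∑ j : ZMod n, ∑ s : ZMod n, h j * h (j - s)
        = ∑ j : ZMod n, h j * ∑ s : ZMod n, h (j - s) := by
          refine Finset.sum_congr rfl fun j _ => ?_
          rw [Finset.mul_sum]
      _ = ∑ j : ZMod n, h j * ∑ s : ZMod n, h s := by
          refine Finset.sum_congr rfl fun j _ => ?_
          congr 1
          exact Fintype.sum_equiv (Equiv.subLeft j) _ _ (fun s => rfl)
      _ = _ := by rw [← Finset.sum_mul]
  have e2 : ∑ s : ZMod n, ∑ j : ZMod n, h j * h (j - s) = (n : ℤ) := by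
    rw [Finset.sum_eq_single (0 : ZMod n)]
    · simp only [sub_zero]
      have : ∀ j : ZMod n, h j * h j = 1 := hsq hsign
      simp [this, Finset.card_univ, ZMod.card]
    · intro s _ hs
      exact hH s hs
    · intro habs
      exact absurd (Finset.mem_univ _) habs
  rw [sq, ← e1, e2]

lemma partA {n m : ℕ} [NeZero n] {h : ZMod n → ℤ} (hn : n = 4 * m) (hm : 1 < m)
    (hsign : signRow n h) (hH : hadamardRow n h) (halpha : alpha1 n h = 2) :
    m ≤ 8 := by
  by_contra hm9
  push_neg at hm9   -- 8 < m
  have hn8 : 8 ≤ n := by omega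
  -- the boundary indicator
  obtain ⟨u, u01, hgu, hiff⟩ : ∃ u : ZMod n → ℤ, (∀ j, u j = 0 ∨ u j = 1) ∧
      (∀ j, h j * h (j + 1) = 1 - 2 * u j) ∧ (∀ j, u j = 1 ↔ h j ≠ h (j + 1)) := by
    refine ⟨fun j => if h j = h (j + 1) then 0 else 1, fun j => ?_, fun j => ?_, fun j => ?_⟩
    · by_cases e : h j = h (j + 1) <;> simp [e]
    · by_cases e : h j = h (j + 1)
      · rw [← e, hsq hsign j]; simp [e]
      · rcases hsign j with e1 | e1 <;> rcases hsign (j + 1) with e2 | e2 <;>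
          simp [e1, e2] at e ⊢ <;> norm_num
    · by_cases e : h j = h (j + 1) <;> simp [e]
  have u0 : ∀ j, (0:ℤ) ≤ u j := fun j => by rcases u01 j with e | e <;> simp [e]
  have u1 : ∀ j, u j ≤ 1 := fun j => by rcases u01 j with e | e <;> simp [e]
  -- numeral facts in ZMod n
  have a2 : (1 : ZMod n) + 1 = 2 := one_add_one_eq_two
  have a3 : (1 : ZMod n) + 2 = 3 := by norm_num
  have a3' : (2 : ZMod n) + 1 = 3 := by norm_num
  -- pattern sums
  set S1 := ∑ j : ZMod n, u j with hS1
  set P1 := ∑ j : ZMod n, u j * u (j + 1) with hP1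
  set P2 := ∑ j : ZMod n, u j * u (j + 2) with hP2
  set P3 := ∑ j : ZMod n, u j * u (j + 3) with hP3
  set T11 := ∑ j : ZMod n, u j * u (j + 1) * u (j + 2) with hT11
  set T12 := ∑ j : ZMod n, u j * u (j + 1) * u (j + 3) with hT12
  set T21 := ∑ j : ZMod n, u j * u (j + 2) * u (j + 3) with hT21
  set Q := ∑ j : ZMod n, u j * u (j + 1) * u (j + 2) * u (j + 3) with hQ
  -- shift normalizations
  have sh1 : ∑ j : ZMod n, u (j + 1) = S1 := sum_shift u 1
  have sh2 : ∑ j : ZMod n, u (j + 2) = S1 := sum_shift u 2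
  have sh3 : ∑ j : ZMod n, u (j + 3) = S1 := sum_shift u 3
  have sh12 : ∑ j : ZMod n, u (j + 1) * u (j + 2) = P1 := by
    have := sum_shift (fun k => u k * u (k + 1)) 1
    simpa only [add_assoc, a2] using this
  have sh23 : ∑ j : ZMod n, u (j + 2) * u (j + 3) = P1 := by
    have := sum_shift (fun k => u k * u (k + 1)) 2
    simpa only [add_assoc, a3'] using this
  have sh13 : ∑ j : ZMod n, u (j + 1) * u (j + 3) = P2 := by
    have := sum_shift (fun k => u k * u (k + 2)) 1
    simpa only [add_assoc, a3] using this
  have sh123 : ∑ j : ZMod n, u (j + 1) * u (j + 2) * u (j + 3) = T11 := by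
    have := sum_shift (fun k => u k * u (k + 1) * u (k + 2)) 1
    simpa only [add_assoc, a2, a3] using this
  -- correlation equations
  have hcast : ∀ j : ZMod n, True := fun _ => trivial
  have c1 : (n:ℤ) - 2 * S1 = 0 := by
    have c := corr_prod hsign hH 1 (cast_ne_zero_of_lt (by norm_num) (by omega))
    simp only [Finset.prod_range_one, Nat.cast_zero, add_zero] at c
    simp only [hgu] at c
    simpa only [Finset.sum_sub_distrib, Finset.sum_const, Finset.card_univ, ZMod.card,
      nsmul_eq_mul, mul_one, ← Finset.mul_sum, ← hS1] using c
  have c2 : (n:ℤ) - 4 * S1 + 4 * P1 = 0 := by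
    have c := corr_prod hsign hH 2 (cast_ne_zero_of_lt (by norm_num) (by omega))
    simp only [Finset.prod_range_succ, Finset.prod_range_zero, one_mul, Nat.cast_zero,
      Nat.cast_one, add_zero] at c
    simp only [hgu] at c
    have e : ∀ j : ZMod n, (1 - 2 * u j) * (1 - 2 * u (j + 1)) =
        1 - 2 * u j - 2 * u (j + 1) + 4 * (u j * u (j + 1)) := fun j => by ring
    simp only [e] at c
    simp only [Finset.sum_add_distrib, Finset.sum_sub_distrib, Finset.sum_const,
      Finset.card_univ, ZMod.card, nsmul_eq_mul, mul_one, ← Finset.mul_sum] at c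
    rw [← hS1, sh1, ← hP1] at c
    linarith [c]

  have c3 : (n:ℤ) - 6 * S1 + 8 * P1 + 4 * P2 - 8 * T11 = 0 := by
    have c := corr_prod hsign hH 3 (cast_ne_zero_of_lt (by norm_num) (by omega))
    simp only [Finset.prod_range_succ, Finset.prod_range_zero, one_mul, Nat.cast_zero,
      Nat.cast_one, Nat.cast_ofNat, add_zero] at c
    simp only [hgu] at c
    have e : ∀ j : ZMod n, (1 - 2 * u j) * (1 - 2 * u (j + 1)) * (1 - 2 * u (j + 2)) =
        1 - 2 * u j - 2 * u (j + 1) - 2 * u (j + 2) + 4 * (u j * u (j + 1))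
          + 4 * (u (j + 1) * u (j + 2)) + 4 * (u j * u (j + 2))
          - 8 * (u j * u (j + 1) * u (j + 2)) := fun j => by ring
    simp only [e] at c
    simp only [Finset.sum_add_distrib, Finset.sum_sub_distrib, Finset.sum_const,
      Finset.card_univ, ZMod.card, nsmul_eq_mul, mul_one, ← Finset.mul_sum] at c
    rw [← hS1, sh1, sh2, sh12, ← hP1, ← hP2, ← hT11] at c
    linarith [c]
  have c4 : (n:ℤ) - 8 * S1 + 12 * P1 + 8 * P2 + 4 * P3 - 16 * T11 - 8 * T12 - 8 * T21
      + 16 * Q = 0 := by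
    have c := corr_prod hsign hH 4 (cast_ne_zero_of_lt (by norm_num) (by omega))
    simp only [Finset.prod_range_succ, Finset.prod_range_zero, one_mul, Nat.cast_zero,
      Nat.cast_one, Nat.cast_ofNat, add_zero] at c
    simp only [hgu] at c
    have e : ∀ j : ZMod n, (1 - 2 * u j) * (1 - 2 * u (j + 1)) * (1 - 2 * u (j + 2))
          * (1 - 2 * u (j + 3)) =
        1 - 2 * u j - 2 * u (j + 1) - 2 * u (j + 2) - 2 * u (j + 3)
          + 4 * (u j * u (j + 1)) + 4 * (u (j + 1) * u (j + 2)) + 4 * (u (j + 2) * u (j + 3))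
          + 4 * (u j * u (j + 2)) + 4 * (u (j + 1) * u (j + 3)) + 4 * (u j * u (j + 3))
          - 8 * (u j * u (j + 1) * u (j + 2)) - 8 * (u (j + 1) * u (j + 2) * u (j + 3))
          - 8 * (u j * u (j + 1) * u (j + 3)) - 8 * (u j * u (j + 2) * u (j + 3))
          + 16 * (u j * u (j + 1) * u (j + 2) * u (j + 3)) := fun j => by ring
    simp only [e] at c
    simp only [Finset.sum_add_distrib, Finset.sum_sub_distrib, Finset.sum_const,
      Finset.card_univ, ZMod.card, nsmul_eq_mul, mul_one, ← Finset.mul_sum] at c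
    rw [← hS1, sh1, sh2, sh3, sh12, sh23, sh13, sh123, ← hP1, ← hP2, ← hP3,
      ← hT11, ← hT12, ← hT21, ← hQ] at c
    linarith [c]
  -- more pattern sums
  set M := ∑ j : ZMod n, (1 - u j) * u (j + 1) with hM
  set N := ∑ j : ZMod n, (1 - u j) * u (j + 1) * u (j + 2) with hN
  set N4 := ∑ j : ZMod n, (1 - u j) * u (j + 1) * u (j + 2) * u (j + 3) with hN4
  set A := ∑ j : ZMod n, u j * u (j + 1) * (1 - u (j + 2)) * u (j + 3) with hA
  set B := ∑ j : ZMod n, u j * (1 - u (j + 1)) * u (j + 2) * u (j + 3) with hB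
  set C := ∑ j : ZMod n, u j * (1 - u (j + 1)) * (1 - u (j + 2)) * u (j + 3) with hC
  have shM2 : ∑ j : ZMod n, (1 - u (j + 2)) * u (j + 3) = M := by
    have := sum_shift (fun k => (1 - u k) * u (k + 1)) 2
    simpa only [add_assoc, a3'] using this
  have shN1 : ∑ j : ZMod n, (1 - u (j + 1)) * u (j + 2) * u (j + 3) = N := by
    have := sum_shift (fun k => (1 - u k) * u (k + 1) * u (k + 2)) 1
    simpa only [add_assoc, a2, a3] using this
  -- M = S1 - P1
  have hMval : M = S1 - P1 := by
    rw [hM]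
    have e : ∀ j : ZMod n, (1 - u j) * u (j + 1) = u (j + 1) - u j * u (j + 1) :=
      fun j => by ring
    simp only [e]
    rw [Finset.sum_sub_distrib, sh1, ← hP1]
  -- N = P1 - T11
  have hNval1 : N = P1 - T11 := by
    rw [hN]
    have e : ∀ j : ZMod n, (1 - u j) * u (j + 1) * u (j + 2) =
        u (j + 1) * u (j + 2) - u j * u (j + 1) * u (j + 2) := fun j => by ring
    simp only [e]
    rw [Finset.sum_sub_distrib, sh12, ← hT11]
  -- the alpha bridge : N = 2
  have ob : ∀ k : ZMod n, oneBlock n h (k + 1) ↔ (u k = 1 ∧ u (k + 1) = 1) := by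
    intro k
    have e1 : k + 1 - 1 = k := by ring
    unfold oneBlock
    rw [e1]
    constructor
    · rintro ⟨x1, x2⟩
      exact ⟨(hiff k).2 (Ne.symm x1), (hiff (k + 1)).2 x2⟩
    · rintro ⟨y1, y2⟩
      exact ⟨Ne.symm ((hiff k).1 y1), (hiff (k + 1)).1 y2⟩
  have ors : ∀ j : ZMod n, oneRunStart n h (j + 2) ↔
      (u j = 0 ∧ u (j + 1) = 1 ∧ u (j + 2) = 1) := by
    intro j
    have obj2 : oneBlock n h (j + 2) ↔ (u (j + 1) = 1 ∧ u (j + 2) = 1) := by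
      have := ob (j + 1)
      rwa [show j + 1 + 1 = j + 2 by ring] at this
    have e2 : j + 2 - 1 = j + 1 := by ring
    unfold oneRunStart
    rw [e2, obj2, ob j]
    rcases u01 j with z | z <;> simp [z] <;> tauto
  have hNval : N = 2 := by
    have step1 : N = ∑ j : ZMod n, (if oneRunStart n h (j + 2) then (1:ℤ) else 0) := by
      rw [hN]
      refine Finset.sum_congr rfl fun j _ => ?_
      rcases u01 j with e0 | e0 <;> rcases u01 (j + 1) with e1 | e1 <;>
        rcases u01 (j + 2) with e2 | e2 <;> simp [ors j, e0, e1, e2]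
    have step2 : ∑ j : ZMod n, (if oneRunStart n h (j + 2) then (1:ℤ) else 0)
        = ∑ j : ZMod n, (if oneRunStart n h j then (1:ℤ) else 0) :=
      sum_shift (fun k => if oneRunStart n h k then (1:ℤ) else 0) 2
    rw [step1, step2, Finset.sum_boole]
    unfold alpha1 at halpha
    rw [halpha]
    norm_num
  -- decompositions at window 4
  have hQlow : Q = S1 - M - N - N4 := by
    rw [hQ]
    have e : ∀ j : ZMod n, u j * u (j + 1) * u (j + 2) * u (j + 3) =
        u (j + 3) - (1 - u (j + 2)) * u (j + 3) - (1 - u (j + 1)) * u (j + 2) * u (j + 3)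
          - (1 - u j) * u (j + 1) * u (j + 2) * u (j + 3) := fun j => by ring
    simp only [e]
    rw [Finset.sum_sub_distrib, Finset.sum_sub_distrib, Finset.sum_sub_distrib,
      sh3, shM2, shN1, ← hN4]
  have hP3d : P3 = Q + A + B + C := by
    rw [hP3]
    have e : ∀ j : ZMod n, u j * u (j + 3) =
        u j * u (j + 1) * u (j + 2) * u (j + 3) + u j * u (j + 1) * (1 - u (j + 2)) * u (j + 3)
          + u j * (1 - u (j + 1)) * u (j + 2) * u (j + 3)
          + u j * (1 - u (j + 1)) * (1 - u (j + 2)) * u (j + 3) := fun j => by ring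
    simp only [e]
    rw [Finset.sum_add_distrib, Finset.sum_add_distrib, Finset.sum_add_distrib,
      ← hQ, ← hA, ← hB, ← hC]
  have hT12d : T12 = Q + A := by
    rw [hT12]
    have e : ∀ j : ZMod n, u j * u (j + 1) * u (j + 3) =
        u j * u (j + 1) * u (j + 2) * u (j + 3)
          + u j * u (j + 1) * (1 - u (j + 2)) * u (j + 3) := fun j => by ring
    simp only [e]
    rw [Finset.sum_add_distrib, ← hQ, ← hA]
  have hT21d : T21 = Q + B := by
    rw [hT21]
    have e : ∀ j : ZMod n, u j * u (j + 2) * u (j + 3) =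
        u j * u (j + 1) * u (j + 2) * u (j + 3)
          + u j * (1 - u (j + 1)) * u (j + 2) * u (j + 3) := fun j => by ring
    simp only [e]
    rw [Finset.sum_add_distrib, ← hQ, ← hB]
  -- nonnegativity bounds
  have fnn : ∀ a b c d : ℤ, (a = 0 ∨ a = 1) → (b = 0 ∨ b = 1) → (c = 0 ∨ c = 1) →
      (d = 0 ∨ d = 1) → 0 ≤ a * b * c * d := by
    rintro a b c d (rfl | rfl) (rfl | rfl) (rfl | rfl) (rfl | rfl) <;> norm_num
  have onem : ∀ a : ℤ, (a = 0 ∨ a = 1) → (1 - a = 0 ∨ 1 - a = 1) := by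
    rintro a (rfl | rfl) <;> norm_num
  have hN4leN : N4 ≤ N := by
    have e : N = N4 + ∑ j : ZMod n, (1 - u j) * u (j + 1) * u (j + 2) * (1 - u (j + 3)) := by
      rw [hN, hN4, ← Finset.sum_add_distrib]
      exact Finset.sum_congr rfl fun j _ => by ring
    have nn : 0 ≤ ∑ j : ZMod n, (1 - u j) * u (j + 1) * u (j + 2) * (1 - u (j + 3)) :=
      Finset.sum_nonneg fun j _ =>
        fnn _ _ _ _ (onem _ (u01 j)) (u01 (j+1)) (u01 (j+2)) (onem _ (u01 (j+3)))
    linarith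
  have hAle : A ≤ P1 - T11 := by
    have e : P1 - T11 = A + ∑ j : ZMod n, u j * u (j + 1) * (1 - u (j + 2)) * (1 - u (j + 3)) := by
      have e0 : P1 - T11 = ∑ j : ZMod n, u j * u (j + 1) * (1 - u (j + 2)) := by
        have e' : ∀ j : ZMod n, u j * u (j + 1) * (1 - u (j + 2)) =
            u j * u (j + 1) - u j * u (j + 1) * u (j + 2) := fun j => by ring
        simp only [e']
        rw [Finset.sum_sub_distrib, ← hP1, ← hT11]
      rw [e0, hA, ← Finset.sum_add_distrib]
      exact Finset.sum_congr rfl fun j _ => by ring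
    have nn : 0 ≤ ∑ j : ZMod n, u j * u (j + 1) * (1 - u (j + 2)) * (1 - u (j + 3)) :=
      Finset.sum_nonneg fun j _ =>
        fnn _ _ _ _ (u01 j) (u01 (j+1)) (onem _ (u01 (j+2))) (onem _ (u01 (j+3)))
    linarith
  have hBle : B ≤ N := by
    have e : N = B + ∑ j : ZMod n, (1 - u j) * (1 - u (j + 1)) * u (j + 2) * u (j + 3) := by
      rw [← shN1, hB, ← Finset.sum_add_distrib]
      exact Finset.sum_congr rfl fun j _ => by ring
    have nn : 0 ≤ ∑ j : ZMod n, (1 - u j) * (1 - u (j + 1)) * u (j + 2) * u (j + 3) :=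
      Finset.sum_nonneg fun j _ =>
        fnn _ _ _ _ (onem _ (u01 j)) (onem _ (u01 (j+1))) (u01 (j+2)) (u01 (j+3))
    linarith
  have hC0 : 0 ≤ C := by
    rw [hC]
    exact Finset.sum_nonneg fun j _ =>
      fnn _ _ _ _ (u01 j) (onem _ (u01 (j+1))) (onem _ (u01 (j+2))) (u01 (j+3))
  -- final contradiction
  have hnz : (n:ℤ) = 4 * (m:ℤ) := by exact_mod_cast congrArg (Nat.cast : ℕ → ℤ) hn
  have hm9' : (9:ℤ) ≤ (m:ℤ) := by exact_mod_cast hm9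
  linarith [c1, c2, c3, c4, hMval, hNval1, hNval, hQlow, hP3d, hT12d, hT21d,
    hN4leN, hAle, hBle, hC0]

end CHM

theorem stmt7 (n m : ℕ) [NeZero n] (h : ZMod n → ℤ)
    (hn : n = 4 * m) (hm : 1 < m)
    (hsign : signRow n h) (hH : hadamardRow n h)
    (halpha : alpha1 n h = 2) : False := by
  have hm8 : m ≤ 8 := CHM.partA hn hm hsign hH halpha
  have hsq2 : (∑ j : ZMod n, h j) ^ 2 = (n : ℤ) := CHM.sum_sq hsign hH
  set t : ℤ := ∑ j : ZMod n, h j with ht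
  have hnz : (n : ℤ) = 4 * (m : ℤ) := by exact_mod_cast congrArg (Nat.cast : ℕ → ℤ) hn
  have h4m : t ^ 2 = 4 * (m : ℤ) := by rw [hsq2, hnz]
  have hm8' : (m : ℤ) ≤ 8 := by exact_mod_cast hm8
  have hm1' : 1 < (m : ℤ) := by exact_mod_cast hm
  have hb : t ^ 2 ≤ 32 := by rw [h4m]; linarith
  have hl : -6 ≤ t := by nlinarith [sq_nonneg (t + 6)]
  have hr : t ≤ 6 := by nlinarith [sq_nonneg (t - 6)]
  have hm4 : m = 4 := by
    interval_cases t <;> norm_num at h4m <;> omega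
  subst hm4
  have hn16 : n = 16 := by omega
  subst hn16
  exact CHM.partC hsign hH halpha
end
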